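/- arXiv:1806.02624 — 6 statements merged into one kernel-verified Lean document; each statement's English description precedes it below -/
import Mathlib

section
/- Let m be a fixed non-negative integer, 1 ≤ p < ∞ and r > 0, and let g : ℂ → ℂ be a measurable function in Ω_m that is locally p-integrable. Then g ∈ BA_r^p if and only if there exists a constant C > 0 such that ∫_ℂ |g(v) h(v)|^p |v|^{mp} e^{−(p/2)|v|²} dA(v) ≤ C ∫_ℂ |h(v)|^p |v|^{mp} e^{−(p/2)|v|²} dA(v) for every entire function h : ℂ → ℂ (i.e., the multiplication operator L_g : F^{p,m} → L^{p,m} is bounded). -/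
open MeasureTheory Metric Complex Filter
open scoped ENNReal

noncomputable section

/-- `Q m w` is the Taylor polynomial of `e^w` of order `m - 1` (with `Q 0 = 0`). -/
def Qc (m : ℕ) (w : ℂ) : ℂ := ∑ k ∈ Finset.range m, w ^ k / (Nat.factorial k : ℂ)

/-- Real version of the Taylor polynomial of `e^x` of order `m - 1`. -/
def Qr (m : ℕ) (x : ℝ) : ℝ := ∑ k ∈ Finset.range m, x ^ k / (Nat.factorial k : ℝ)

/-- The weight `|e^{z̄v} − Q_m(z̄v)|² e^{−|v|²}`. -/
def kw (m : ℕ) (z v : ℂ) : ℝ :=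
  ‖Complex.exp ((starRingEnd ℂ) z * v) - Qc m ((starRingEnd ℂ) z * v)‖ ^ 2 *
    Real.exp (-(‖v‖ ^ 2))

/-- The normalizing factor `π (e^{|z|²} − Q_m(|z|²))`. -/
def dz (m : ℕ) (z : ℂ) : ℝ :=
  Real.pi * (Real.exp (‖z‖ ^ 2) - Qr m (‖z‖ ^ 2))

/-- The Berezin transform `B_m g`. -/
def berezin (m : ℕ) (g : ℂ → ℂ) (z : ℂ) : ℂ :=
  (dz m z)⁻¹ • ∫ v : ℂ, kw m z v • g v

/-- Local `p`-integrability of `g`. -/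
def LocIntP (p : ℝ) (g : ℂ → ℂ) : Prop :=
  ∀ K : Set ℂ, IsCompact K → IntegrableOn (fun v => ‖g v‖ ^ p) K

/-- The mean `g̃_r(z)` of `g` over the closed disk `B(z;r)`. -/
def avg (r : ℝ) (g : ℂ → ℂ) (z : ℂ) : ℂ :=
  (Real.pi * r ^ 2)⁻¹ • ∫ v in closedBall z r, g v

/-- `g ∈ BA_r^p`. -/
def MemBA (p r : ℝ) (g : ℂ → ℂ) : Prop :=
  ∃ C : ℝ, ∀ z : ℂ,
    (∫⁻ v in closedBall z r, ENNReal.ofReal (‖g v‖ ^ p)) / ENNReal.ofReal (Real.pi * r ^ 2)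
      ≤ ENNReal.ofReal C

/-- `g ∈ BMO_r^p`. -/
def MemBMO (p r : ℝ) (g : ℂ → ℂ) : Prop :=
  ∃ C : ℝ, ∀ z : ℂ,
    (∫⁻ v in closedBall z r, ENNReal.ofReal (‖g v - avg r g z‖ ^ p)) /
      ENNReal.ofReal (Real.pi * r ^ 2) ≤ ENNReal.ofReal C

/-- `g ∈ VA_r^p`. -/
def MemVA (p r : ℝ) (g : ℂ → ℂ) : Prop :=
  Tendsto (fun z : ℂ =>
      (∫⁻ v in closedBall z r, ENNReal.ofReal (‖g v‖ ^ p)) / ENNReal.ofReal (Real.pi * r ^ 2))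
    (cocompact ℂ) (nhds 0)

/-- `g ∈ VMO_r^p`. -/
def MemVMO (p r : ℝ) (g : ℂ → ℂ) : Prop :=
  Tendsto (fun z : ℂ =>
      (∫⁻ v in closedBall z r, ENNReal.ofReal (‖g v - avg r g z‖ ^ p)) /
        ENNReal.ofReal (Real.pi * r ^ 2))
    (cocompact ℂ) (nhds 0)

/-- `g ∈ BO_r`. -/
def MemBO (r : ℝ) (g : ℂ → ℂ) : Prop :=
  Continuous g ∧ ∃ C : ℝ, ∀ z : ℂ, ∀ v ∈ closedBall z r, ‖g v - g z‖ ≤ C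

/-- `g ∈ VO_r`: continuous with `sup_{v ∈ B(z;r)} |g(v) − g(z)| → 0` as `|z| → ∞`. -/
def MemVO (r : ℝ) (g : ℂ → ℂ) : Prop :=
  Continuous g ∧ ∀ ε > (0 : ℝ), ∃ M : ℝ, ∀ z : ℂ, M < ‖z‖ →
    ∀ v ∈ closedBall z r, ‖g v - g z‖ ≤ ε

/-- The reproducing kernel `K_z^m(v) = Σ_k (m!/(k+m)!) (z̄ v)^k`. -/
def Kker (m : ℕ) (z v : ℂ) : ℂ :=
  ∑' k : ℕ, ((Nat.factorial m : ℂ) / (Nat.factorial (k + m) : ℂ)) * ((starRingEnd ℂ) z * v) ^ k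

/-- `g ∈ Ω_m`: `g` is measurable and `g · K_u^m` lies in some `L^{p',m}`, for every `u`. -/
def MemOmega (m : ℕ) (g : ℂ → ℂ) : Prop :=
  Measurable g ∧ ∀ u : ℂ, ∃ p' : ℝ, 1 ≤ p' ∧
    (∫⁻ w : ℂ, ENNReal.ofReal (‖g w * Kker m u w‖ ^ p' * ‖w‖ ^ ((m : ℝ) * p') *
      Real.exp (-(p' / 2) * ‖w‖ ^ 2))) < ⊤

/-- The normalizing constant `ω_{p,m}`. -/
def omegaC (m : ℕ) (p : ℝ) : ℝ :=
  (p / 2) ^ ((m : ℝ) * p / 2 + 1) / (Real.pi * Real.Gamma ((m : ℝ) * p / 2 + 1))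

/-- The `p`-th power of the Fock–Sobolev norm `‖h‖_{p,m}^p`, as an extended real. -/
def fockNormP (m : ℕ) (p : ℝ) (h : ℂ → ℂ) : ℝ≥0∞ :=
  ENNReal.ofReal (omegaC m p) *
    ∫⁻ v : ℂ, ENNReal.ofReal (‖h v‖ ^ p * ‖v‖ ^ ((m : ℝ) * p) *
      Real.exp (-(p / 2) * ‖v‖ ^ 2))

/-- The Hankel operator `H_g f`. -/
def hankel (m : ℕ) (g f : ℂ → ℂ) (z : ℂ) : ℂ :=
  Real.pi⁻¹ • ∫ v : ℂ, (‖v‖ ^ (2 * m) * Real.exp (-(‖v‖ ^ 2))) •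
    ((g z - g v) * f v * (starRingEnd ℂ) (Kker m z v))

lemma circle_norm_bound (F : ℂ → ℂ) (hF : Differentiable ℂ F) (c : ℂ) {s : ℝ} (hs : 0 < s) :
    2 * Real.pi * ‖F c‖ ≤ ∫ θ in (0:ℝ)..(2 * Real.pi), ‖F (circleMap c s θ)‖ := by
  have h := circleIntegral_sub_center_inv_smul_of_differentiable_on_off_countable (c := c) (f := F) hs
      Set.countable_empty (hF.continuous.continuousOn) (fun z _ => hF.differentiableAt)
  have hnorm : ‖(2 * Real.pi * Complex.I : ℂ) • F c‖ = 2 * Real.pi * ‖F c‖ := by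
    simp [norm_smul, _root_.abs_of_nonneg Real.pi_nonneg]
  calc 2 * Real.pi * ‖F c‖ = ‖∮ z in C(c, s), (z - c)⁻¹ • F z‖ := by rw [h, hnorm]
    _ ≤ ∫ θ in (0:ℝ)..(2 * Real.pi),
        ‖deriv (circleMap c s) θ • ((circleMap c s θ - c)⁻¹ • F (circleMap c s θ))‖ := by
        apply intervalIntegral.norm_integral_le_integral_norm Real.two_pi_pos.le
    _ = ∫ θ in (0:ℝ)..(2 * Real.pi), ‖F (circleMap c s θ)‖ := by
        apply intervalIntegral.integral_congr
        intro θ _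
        have h1 : circleMap 0 s θ ≠ 0 := by simpa [circleMap_eq_center_iff] using hs.ne'
        simp [deriv_circleMap, circleMap_sub_center, norm_smul, norm_circleMap_zero,
          abs_of_pos hs, map_inv₀]
        field_simp
lemma circle_rpow_bound (F : ℂ → ℂ) (hF : Differentiable ℂ F) {p : ℝ} (hp : 1 ≤ p) (c : ℂ)
    {s : ℝ} (hs : 0 < s) :
    2 * Real.pi * ‖F c‖ ^ p ≤ ∫ θ in Set.Ioc 0 (2 * Real.pi), ‖F (circleMap c s θ)‖ ^ p := by
  have hp0 : (0:ℝ) < p := lt_of_lt_of_le one_pos hp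
  set μ : Measure ℝ := volume.restrict (Set.Ioc 0 (2 * Real.pi)) with hμ
  have hμuniv : μ Set.univ = ENNReal.ofReal (2 * Real.pi) := by
    simp [hμ, Measure.restrict_apply_univ, Real.volume_Ioc]
  haveI : IsFiniteMeasure μ := ⟨by rw [hμuniv]; exact ENNReal.ofReal_lt_top⟩
  haveI : NeZero μ := ⟨by
    intro h
    have := hμuniv
    rw [h] at this
    simp only [Measure.coe_zero, Pi.zero_apply] at this
    rw [eq_comm, ENNReal.ofReal_eq_zero] at this
    linarith [Real.two_pi_pos]⟩
  have hcont : Continuous fun θ : ℝ => ‖F (circleMap c s θ)‖ :=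
    (hF.continuous.comp (continuous_circleMap c s)).norm
  have hcontp : Continuous fun θ : ℝ => ‖F (circleMap c s θ)‖ ^ p :=
    hcont.rpow_const (fun x => Or.inr hp0.le)
  have hconv : ConvexOn ℝ (Set.Ici (0:ℝ)) fun x : ℝ => x ^ p := convexOn_rpow hp
  have hgc : ContinuousOn (fun x : ℝ => x ^ p) (Set.Ici (0:ℝ)) := fun x hx =>
    (Real.continuousAt_rpow_const x p (Or.inr hp0.le)).continuousWithinAt
  have hfs : ∀ᵐ θ ∂μ, ‖F (circleMap c s θ)‖ ∈ Set.Ici (0:ℝ) :=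
    Filter.Eventually.of_forall fun θ => norm_nonneg _
  have hfi : Integrable (fun θ => ‖F (circleMap c s θ)‖) μ :=
    hcont.integrableOn_Ioc
  have hgi : Integrable ((fun x : ℝ => x ^ p) ∘ fun θ => ‖F (circleMap c s θ)‖) μ :=
    hcontp.integrableOn_Ioc
  have hJ := hconv.map_average_le hgc isClosed_Ici hfs hfi hgi
  have havg : ∀ f : ℝ → ℝ, (⨍ θ, f θ ∂μ) = (2 * Real.pi)⁻¹ * ∫ θ, f θ ∂μ := by
    intro f
    rw [average_eq, measureReal_def, hμuniv, ENNReal.toReal_ofReal Real.two_pi_pos.le, smul_eq_mul]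
  rw [havg, havg] at hJ
  have h1 : ‖F c‖ ≤ (2 * Real.pi)⁻¹ * ∫ θ, ‖F (circleMap c s θ)‖ ∂μ := by
    have := circle_norm_bound F hF c hs
    rw [intervalIntegral.integral_of_le Real.two_pi_pos.le] at this
    rw [inv_mul_eq_div, le_div_iff₀ Real.two_pi_pos]
    linarith [this]
  have h2 : ‖F c‖ ^ p ≤ ((2 * Real.pi)⁻¹ * ∫ θ, ‖F (circleMap c s θ)‖ ∂μ) ^ p :=
    Real.rpow_le_rpow (norm_nonneg _) h1 hp0.le
  have h3 := le_trans h2 hJ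
  rw [mul_comm (2 * Real.pi)]
  rw [inv_mul_eq_div, le_div_iff₀ Real.two_pi_pos] at h3
  calc ‖F c‖ ^ p * (2 * Real.pi) ≤ _ := h3
    _ = _ := rfl
lemma ball_rpow_bound (F : ℂ → ℂ) (hF : Differentiable ℂ F) {p : ℝ} (hp : 1 ≤ p) (c : ℂ)
    {r : ℝ} (hr : 0 < r) :
    Real.pi * r ^ 2 * ‖F c‖ ^ p ≤ ∫ u in closedBall c r, ‖F u‖ ^ p := by
  have hp0 : (0:ℝ) < p := lt_of_lt_of_le one_pos hp
  set f : ℂ → ℝ := fun u => ‖F u‖ ^ p with hf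
  have hfc : Continuous f := (hF.continuous.norm).rpow_const fun x => Or.inr hp0.le
  have hfnn : ∀ u, 0 ≤ f u := fun u => Real.rpow_nonneg (norm_nonneg _) p
  set G : ℂ → ℝ := fun w => Set.indicator (closedBall (0:ℂ) r) (fun w => f (c + w)) w with hG
  -- step 1 : translate
  have step1 : ∫ u in closedBall c r, f u = ∫ w, G w := by
    rw [← integral_indicator measurableSet_closedBall]
    rw [← integral_add_left_eq_self (fun u => Set.indicator (closedBall c r) f u) c]
    congr 1 with w
    rw [hG]
    simp only []
    by_cases hw : w ∈ closedBall (0:ℂ) r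
    · rw [Set.indicator_of_mem hw,
        Set.indicator_of_mem (by simpa [mem_closedBall, dist_eq_norm] using hw)]
    · rw [Set.indicator_of_notMem hw,
        Set.indicator_of_notMem (by simpa [mem_closedBall, dist_eq_norm] using hw)]
  -- step 2 : polar coordinates
  have step2 : ∫ w, G w = ∫ q in polarCoord.target, q.1 • G (Complex.polarCoord.symm q) :=
    (Complex.integral_comp_polarCoord_symm G).symm
  -- step 3 : the integrand vanishes outside T
  set T : Set (ℝ × ℝ) := Set.Ioc 0 r ×ˢ Set.Ioo (-Real.pi) Real.pi with hT
  have hTsub : T ⊆ polarCoord.target := by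
    rw [polarCoord_target]
    exact Set.prod_mono Set.Ioc_subset_Ioi_self subset_rfl
  have hTm : MeasurableSet polarCoord.target :=
    polarCoord.open_target.measurableSet
  have step3 : ∫ q in polarCoord.target, q.1 • G (Complex.polarCoord.symm q)
      = ∫ q in T, q.1 • G (Complex.polarCoord.symm q) := by
    apply setIntegral_eq_of_subset_of_forall_diff_eq_zero hTm hTsub
    intro q hq
    rcases hq with ⟨hq1, hq2⟩
    rw [polarCoord_target] at hq1
    have hq1' : 0 < q.1 := hq1.1
    have : r < q.1 := by
      by_contra hle
      push_neg at hle
      exact hq2 ⟨⟨hq1', hle⟩, hq1.2⟩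
    have habs : ‖Complex.polarCoord.symm q‖ = q.1 := by
      rw [Complex.norm_polarCoord_symm, abs_of_pos hq1']
    have : Complex.polarCoord.symm q ∉ closedBall (0:ℂ) r := by
      simp only [mem_closedBall, dist_zero_right, habs, not_le]
      exact this
    simp only [hG]
    rw [Set.indicator_of_notMem this, smul_zero]
  -- step 4 : on T the integrand is q.1 * f (circleMap c q.1 q.2)
  have key : ∀ q ∈ T, q.1 • G (Complex.polarCoord.symm q) = q.1 * f (circleMap c q.1 q.2) := by
    intro q hq
    rcases hq with ⟨hq1, _⟩
    have hmem : Complex.polarCoord.symm q ∈ closedBall (0:ℂ) r := by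
      simp only [mem_closedBall, dist_zero_right,
        Complex.norm_polarCoord_symm, abs_of_pos hq1.1]
      exact hq1.2
    have hcirc : c + Complex.polarCoord.symm q = circleMap c q.1 q.2 := by
      rw [Complex.polarCoord_symm_apply, circleMap]
      congr 1
      rw [Complex.exp_mul_I, Complex.ofReal_cos, Complex.ofReal_sin]
    rw [hG]
    simp only [Set.indicator_of_mem hmem, smul_eq_mul, hcirc]
  have step4 : ∫ q in T, q.1 • G (Complex.polarCoord.symm q)
      = ∫ q in T, q.1 * f (circleMap c q.1 q.2) :=
    setIntegral_congr_fun (by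
      exact (measurableSet_Ioc.prod measurableSet_Ioo)) key
  -- continuity & integrability of φ on T
  have hcm : Continuous fun q : ℝ × ℝ => circleMap c q.1 q.2 := by
    simp only [circleMap]
    exact continuous_const.add ((Complex.continuous_ofReal.comp continuous_fst).mul
      (((Complex.continuous_ofReal.comp continuous_snd).mul continuous_const).cexp))
  have hφc : Continuous fun q : ℝ × ℝ => q.1 * f (circleMap c q.1 q.2) :=
    continuous_fst.mul (hfc.comp hcm)
  have hφi : IntegrableOn (fun q : ℝ × ℝ => q.1 * f (circleMap c q.1 q.2)) T := by
    have hsub : T ⊆ Set.Icc ((0:ℝ), -Real.pi) (r, Real.pi) := by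
      rw [Set.Icc_prod_eq]
      exact Set.prod_mono Set.Ioc_subset_Icc_self Set.Ioo_subset_Icc_self
    exact ((hφc.continuousOn).integrableOn_compact isCompact_Icc).mono_set hsub
  -- step 5 : Fubini
  have hφi' : Integrable (fun q : ℝ × ℝ => q.1 * f (circleMap c q.1 q.2))
      ((volume.restrict (Set.Ioc (0:ℝ) r)).prod (volume.restrict (Set.Ioo (-Real.pi) Real.pi))) := by
    rwa [Measure.prod_restrict, ← Measure.volume_eq_prod]
  have step5 : ∫ q in T, q.1 * f (circleMap c q.1 q.2)
      = ∫ x in Set.Ioc (0:ℝ) r, ∫ θ in Set.Ioo (-Real.pi) Real.pi, x * f (circleMap c x θ) := by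
    rw [hT, Measure.volume_eq_prod, ← Measure.prod_restrict]
    exact integral_prod _ hφi'
  -- step 6 : inner integral bound
  have inner_bound : ∀ x : ℝ, x ∈ Set.Ioc (0:ℝ) r →
      2 * Real.pi * ‖F c‖ ^ p ≤ ∫ θ in Set.Ioo (-Real.pi) Real.pi, f (circleMap c x θ) := by
    intro x hx
    have hper : Function.Periodic (fun θ => f (circleMap c x θ)) (2 * Real.pi) :=
      (periodic_circleMap c x).comp f
    have e1 : -Real.pi + 2 * Real.pi = Real.pi := by ring
    have h2 := hper.intervalIntegral_add_eq (-Real.pi) 0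
    rw [e1, zero_add] at h2
    have : ∫ θ in Set.Ioo (-Real.pi) Real.pi, f (circleMap c x θ)
        = ∫ θ in Set.Ioc (0:ℝ) (2*Real.pi), f (circleMap c x θ) := by
      rw [← integral_Ioc_eq_integral_Ioo, ← intervalIntegral.integral_of_le (by linarith [Real.pi_pos]),
        h2, intervalIntegral.integral_of_le Real.two_pi_pos.le]
    rw [this]
    exact circle_rpow_bound F hF hp c hx.1
  -- step 7 : outer integral bound
  have houter : ∫ x in Set.Ioc (0:ℝ) r, x * (2 * Real.pi * ‖F c‖ ^ p)
      ≤ ∫ x in Set.Ioc (0:ℝ) r, ∫ θ in Set.Ioo (-Real.pi) Real.pi, x * f (circleMap c x θ) := by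
    apply setIntegral_mono_on
    · exact (continuous_id.mul continuous_const).integrableOn_Ioc
    · have := hφi'.integral_prod_left
      exact this
    · exact measurableSet_Ioc
    · intro x hx
      rw [MeasureTheory.integral_const_mul]
      exact mul_le_mul_of_nonneg_left (inner_bound x hx) (le_of_lt hx.1)
  have hval : ∫ x in Set.Ioc (0:ℝ) r, x * (2 * Real.pi * ‖F c‖ ^ p)
      = Real.pi * r ^ 2 * ‖F c‖ ^ p := by
    rw [integral_mul_const]
    rw [← intervalIntegral.integral_of_le hr.le, integral_id]
    ring
  calc Real.pi * r ^ 2 * ‖F c‖ ^ p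
      = ∫ x in Set.Ioc (0:ℝ) r, x * (2 * Real.pi * ‖F c‖ ^ p) := hval.symm
    _ ≤ ∫ x in Set.Ioc (0:ℝ) r, ∫ θ in Set.Ioo (-Real.pi) Real.pi, x * f (circleMap c x θ) := houter
    _ = ∫ q in T, q.1 * f (circleMap c q.1 q.2) := step5.symm
    _ = ∫ u in closedBall c r, f u := by rw [← step4, ← step3, ← step2, ← step1]
lemma abs_sub_sq' (u v : ℂ) :
    ‖u - v‖ ^ 2
      = ‖u‖ ^ 2 + ‖v‖ ^ 2 - 2 * ((starRingEnd ℂ) v * u).re := by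
  rw [Complex.sq_norm, Complex.sq_norm, Complex.sq_norm, Complex.normSq_sub]
  congr 2
  rw [mul_comm]

lemma key_pointwise (F : ℂ → ℂ) (hF : Differentiable ℂ F) {p r : ℝ} (hp : 1 ≤ p) (hr : 0 < r)
    (v : ℂ) :
    ENNReal.ofReal (Real.pi * r ^ 2) *
      ENNReal.ofReal (‖F v‖ ^ p * Real.exp (-(p / 2) * ‖v‖ ^ 2)) ≤
    ENNReal.ofReal (Real.exp (p * r ^ 2 / 2)) *
      ∫⁻ u in closedBall v r,
        ENNReal.ofReal (‖F u‖ ^ p * Real.exp (-(p / 2) * ‖u‖ ^ 2)) := by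
  have hp0 : (0:ℝ) < p := lt_of_lt_of_le one_pos hp
  set H : ℂ → ℂ := fun u =>
    F u * Complex.exp (((‖v‖ ^ 2 / 2 : ℝ) : ℂ) - (starRingEnd ℂ) v * u) with hH
  have hHd : Differentiable ℂ H :=
    hF.mul ((differentiable_const _).sub ((differentiable_const _).mul differentiable_id)).cexp
  have hHnorm : ∀ u, ‖H u‖
      = ‖F u‖ * Real.exp (‖v‖ ^ 2 / 2 - ((starRingEnd ℂ) v * u).re) := by
    intro u
    rw [hH]
    simp [norm_mul, Complex.norm_exp, Complex.sub_re, ← Complex.ofReal_pow]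
  have hHv : ‖H v‖ = ‖F v‖ * Real.exp (-(‖v‖ ^ 2) / 2) := by
    rw [hHnorm v]
    have h1 : ((starRingEnd ℂ) v * v).re = ‖v‖ ^ 2 := by
      rw [mul_comm, Complex.mul_conj]
      simp [Complex.sq_norm]
    rw [h1, show ‖v‖ ^ 2 / 2 - ‖v‖ ^ 2 = -(‖v‖ ^ 2) / 2 by ring]
  -- pointwise upper bound for ‖H u‖^p on the ball
  have hup : ∀ u ∈ closedBall v r,
      ‖H u‖ ^ p ≤ Real.exp (p * r ^ 2 / 2) * (‖F u‖ ^ p * Real.exp (-(p / 2) * ‖u‖ ^ 2)) := by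
    intro u hu
    have hd : ‖u - v‖ ^ 2 ≤ r ^ 2 := by
      have : ‖u - v‖ ≤ r := by
        rw [mem_closedBall, dist_eq_norm] at hu
        simpa using hu
      exact pow_le_pow_left₀ (norm_nonneg _) this 2 |>.trans_eq rfl
    have hexp : ‖v‖ ^ 2 / 2 - ((starRingEnd ℂ) v * u).re
        ≤ -(‖u‖ ^ 2) / 2 + r ^ 2 / 2 := by
      have := abs_sub_sq' u v
      nlinarith [this, hd]
    have h1 : ‖H u‖ ≤ ‖F u‖ * Real.exp (-(‖u‖ ^ 2) / 2 + r ^ 2 / 2) := by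
      rw [hHnorm u]
      exact mul_le_mul_of_nonneg_left (Real.exp_le_exp.2 hexp) (norm_nonneg _)
    calc ‖H u‖ ^ p ≤ (‖F u‖ * Real.exp (-(‖u‖ ^ 2) / 2 + r ^ 2 / 2)) ^ p :=
          Real.rpow_le_rpow (norm_nonneg _) h1 hp0.le
      _ = ‖F u‖ ^ p * Real.exp ((-(‖u‖ ^ 2) / 2 + r ^ 2 / 2) * p) := by
          rw [Real.mul_rpow (norm_nonneg _) (Real.exp_pos _).le, ← Real.exp_mul]
      _ = Real.exp (p * r ^ 2 / 2) * (‖F u‖ ^ p * Real.exp (-(p / 2) * ‖u‖ ^ 2)) := by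
          rw [show (-(‖u‖ ^ 2) / 2 + r ^ 2 / 2) * p
              = -(p / 2) * ‖u‖ ^ 2 + p * r ^ 2 / 2 by ring, Real.exp_add]
          ring
  -- continuity of the weighted integrand
  have hWc : Continuous fun u : ℂ => ‖F u‖ ^ p * Real.exp (-(p / 2) * ‖u‖ ^ 2) := by
    apply Continuous.mul
    · exact (hF.continuous.norm).rpow_const fun x => Or.inr hp0.le
    · exact (Continuous.mul continuous_const ((continuous_norm).pow 2)).rexp
  have hHpc : Continuous fun u : ℂ => ‖H u‖ ^ p :=
    (hHd.continuous.norm).rpow_const fun x => Or.inr hp0.le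
  -- real inequality
  have hreal : Real.pi * r ^ 2 * (‖F v‖ ^ p * Real.exp (-(p / 2) * ‖v‖ ^ 2))
      ≤ Real.exp (p * r ^ 2 / 2) *
        ∫ u in closedBall v r, ‖F u‖ ^ p * Real.exp (-(p / 2) * ‖u‖ ^ 2) := by
    have h0 := ball_rpow_bound H hHd hp v hr
    have hHvp : ‖H v‖ ^ p = ‖F v‖ ^ p * Real.exp (-(p / 2) * ‖v‖ ^ 2) := by
      rw [hHv, Real.mul_rpow (norm_nonneg _) (Real.exp_pos _).le, ← Real.exp_mul]
      congr 2
      ring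
    have hmono : ∫ u in closedBall v r, ‖H u‖ ^ p
        ≤ ∫ u in closedBall v r,
            Real.exp (p * r ^ 2 / 2) * (‖F u‖ ^ p * Real.exp (-(p / 2) * ‖u‖ ^ 2)) := by
      apply setIntegral_mono_on
      · exact hHpc.continuousOn.integrableOn_compact (isCompact_closedBall v r)
      · exact (continuous_const.mul hWc).continuousOn.integrableOn_compact (isCompact_closedBall v r)
      · exact measurableSet_closedBall
      · exact hup
    rw [integral_const_mul] at hmono
    calc Real.pi * r ^ 2 * (‖F v‖ ^ p * Real.exp (-(p / 2) * ‖v‖ ^ 2))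
        = Real.pi * r ^ 2 * ‖H v‖ ^ p := by rw [hHvp]
      _ ≤ ∫ u in closedBall v r, ‖H u‖ ^ p := h0
      _ ≤ _ := hmono
  -- pass to lintegrals
  have hInt : IntegrableOn (fun u => ‖F u‖ ^ p * Real.exp (-(p / 2) * ‖u‖ ^ 2))
      (closedBall v r) :=
    hWc.continuousOn.integrableOn_compact (isCompact_closedBall v r)
  have hnn : 0 ≤ᵐ[volume.restrict (closedBall v r)]
      fun u => ‖F u‖ ^ p * Real.exp (-(p / 2) * ‖u‖ ^ 2) :=
    Filter.Eventually.of_forall fun u =>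
      mul_nonneg (Real.rpow_nonneg (norm_nonneg _) _) (Real.exp_pos _).le
  calc ENNReal.ofReal (Real.pi * r ^ 2) *
        ENNReal.ofReal (‖F v‖ ^ p * Real.exp (-(p / 2) * ‖v‖ ^ 2))
      = ENNReal.ofReal (Real.pi * r ^ 2 * (‖F v‖ ^ p * Real.exp (-(p / 2) * ‖v‖ ^ 2))) :=
        (ENNReal.ofReal_mul (by positivity : (0:ℝ) ≤ Real.pi * r ^ 2)).symm
    _ ≤ ENNReal.ofReal (Real.exp (p * r ^ 2 / 2) *
          ∫ u in closedBall v r, ‖F u‖ ^ p * Real.exp (-(p / 2) * ‖u‖ ^ 2)) :=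
        ENNReal.ofReal_le_ofReal hreal
    _ = ENNReal.ofReal (Real.exp (p * r ^ 2 / 2)) *
          ENNReal.ofReal (∫ u in closedBall v r, ‖F u‖ ^ p * Real.exp (-(p / 2) * ‖u‖ ^ 2)) := by
        rw [ENNReal.ofReal_mul (Real.exp_pos _).le]
    _ = _ := by
        rw [ofReal_integral_eq_lintegral_ofReal hInt hnn]
lemma rpow_exp_bound (q c : ℝ) (hq : 0 ≤ q) (hc : 0 < c) :
    ∃ K : ℝ, 0 ≤ K ∧ ∀ x : ℝ, 0 ≤ x →
      x ^ q * Real.exp (-c * x ^ 2) ≤ K * Real.exp (-(c / 2) * x ^ 2) := by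
  set n := ⌈q⌉₊ with hn
  set K := max 1 ((n.factorial : ℝ) * (2 / c) ^ n) with hK
  have hK0 : (0:ℝ) ≤ K := le_max_of_le_left zero_le_one
  refine ⟨K, hK0, ?_⟩
  intro x hx
  have key : x ^ q ≤ K * Real.exp ((c / 2) * x ^ 2) := by
    have hexp1 : (1:ℝ) ≤ Real.exp ((c / 2) * x ^ 2) := Real.one_le_exp (by positivity)
    rcases le_total x 1 with hx1 | hx1
    · calc x ^ q ≤ 1 := Real.rpow_le_one hx hx1 hq
        _ ≤ K * 1 := by rw [mul_one, hK]; exact le_max_left _ _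
        _ ≤ K * Real.exp ((c / 2) * x ^ 2) := by
            exact mul_le_mul_of_nonneg_left hexp1 hK0
    · have h1 : x ^ q ≤ x ^ (n : ℕ) := by
        rw [← Real.rpow_natCast x n]
        exact Real.rpow_le_rpow_of_exponent_le hx1 (Nat.le_ceil q)
      have h1' : x ^ (n : ℕ) ≤ x ^ (2 * n) := pow_le_pow_right₀ hx1 (by omega)
      have h3 : (c / 2) ^ n * x ^ (2 * n) ≤ (n.factorial : ℝ) * Real.exp ((c / 2) * x ^ 2) := by
        have h2 := Real.pow_div_factorial_le_exp ((c / 2) * x ^ 2) (by positivity) n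
        rw [div_le_iff₀ (by positivity)] at h2
        calc (c / 2) ^ n * x ^ (2 * n) = ((c / 2) * x ^ 2) ^ n := by
              rw [mul_pow, pow_mul]
          _ ≤ _ := by linarith [h2]
      have hid : ((2:ℝ) / c) ^ n * (c / 2) ^ n = 1 := by
        rw [← mul_pow]
        field_simp
        exact one_pow n
      have h5 := mul_le_mul_of_nonneg_left h3 (by positivity : (0:ℝ) ≤ (2 / c) ^ n)
      rw [← mul_assoc, hid, one_mul] at h5
      calc x ^ q ≤ x ^ (2 * n) := le_trans h1 h1'
        _ ≤ (2 / c) ^ n * ((n.factorial : ℝ) * Real.exp ((c / 2) * x ^ 2)) := h5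
        _ = ((n.factorial : ℝ) * (2 / c) ^ n) * Real.exp ((c / 2) * x ^ 2) := by ring
        _ ≤ K * Real.exp ((c / 2) * x ^ 2) := by
            exact mul_le_mul_of_nonneg_right (le_max_right _ _) (Real.exp_pos _).le
  calc x ^ q * Real.exp (-c * x ^ 2)
      ≤ (K * Real.exp ((c / 2) * x ^ 2)) * Real.exp (-c * x ^ 2) :=
        mul_le_mul_of_nonneg_right key (Real.exp_pos _).le
    _ = K * Real.exp (-(c / 2) * x ^ 2) := by
        rw [mul_assoc, ← Real.exp_add]
        congr 2
        ring

lemma gauss_finite (c : ℝ) (hc : 0 < c) :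
    ∫⁻ w : ℂ, ENNReal.ofReal (Real.exp (-c * ‖w‖ ^ 2)) < ⊤ := by
  have h1 : ∀ w : ℂ, ENNReal.ofReal (Real.exp (-c * ‖w‖ ^ 2))
      = ENNReal.ofReal (Real.exp (-c * w.re ^ 2) * Real.exp (-c * w.im ^ 2)) := by
    intro w
    rw [← Real.exp_add]
    congr 2
    rw [Complex.sq_norm, Complex.normSq_apply]
    ring
  simp_rw [h1]
  have hmes : Measurable fun y : ℝ × ℝ =>
      ENNReal.ofReal (Real.exp (-c * y.1 ^ 2) * Real.exp (-c * y.2 ^ 2)) := by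
    fun_prop
  have htrans : ∫⁻ w : ℂ,
      ENNReal.ofReal (Real.exp (-c * w.re ^ 2) * Real.exp (-c * w.im ^ 2))
      = ∫⁻ y : ℝ × ℝ,
      ENNReal.ofReal (Real.exp (-c * y.1 ^ 2) * Real.exp (-c * y.2 ^ 2)) := by
    rw [← Complex.volume_preserving_equiv_real_prod.lintegral_comp hmes]
    rfl
  rw [htrans]
  have hint : Integrable (fun y : ℝ × ℝ => Real.exp (-c * y.1 ^ 2) * Real.exp (-c * y.2 ^ 2)) := by
    rw [Measure.volume_eq_prod]
    exact (integrable_exp_neg_mul_sq hc).mul_prod (integrable_exp_neg_mul_sq hc)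
  exact hint.lintegral_lt_top

lemma gauss_rpow_finite (q c : ℝ) (hq : 0 ≤ q) (hc : 0 < c) :
    ∫⁻ w : ℂ, ENNReal.ofReal (‖w‖ ^ q * Real.exp (-c * ‖w‖ ^ 2)) < ⊤ := by
  obtain ⟨K, hK0, hK⟩ := rpow_exp_bound q c hq hc
  calc ∫⁻ w : ℂ, ENNReal.ofReal (‖w‖ ^ q * Real.exp (-c * ‖w‖ ^ 2))
      ≤ ∫⁻ w : ℂ, ENNReal.ofReal (K * Real.exp (-(c / 2) * ‖w‖ ^ 2)) :=
        lintegral_mono fun w => ENNReal.ofReal_le_ofReal (hK _ (norm_nonneg _))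
    _ = ENNReal.ofReal K * ∫⁻ w : ℂ, ENNReal.ofReal (Real.exp (-(c / 2) * ‖w‖ ^ 2)) := by
        simp_rw [ENNReal.ofReal_mul hK0]
        rw [lintegral_const_mul' _ _ ENNReal.ofReal_ne_top]
    _ < ⊤ := ENNReal.mul_lt_top ENNReal.ofReal_lt_top (gauss_finite _ (half_pos hc))

lemma add_rpow_le (a b q : ℝ) (ha : 0 ≤ a) (hb : 0 ≤ b) (hq : 0 ≤ q) :
    (a + b) ^ q ≤ 2 ^ q * (a ^ q + b ^ q) := by
  rcases le_total a b with h | h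
  · calc (a + b) ^ q ≤ (2 * b) ^ q :=
        Real.rpow_le_rpow (by linarith) (by linarith) hq
      _ = 2 ^ q * b ^ q := Real.mul_rpow (by norm_num) hb
      _ ≤ 2 ^ q * (a ^ q + b ^ q) := by
        have : (0:ℝ) ≤ a ^ q := Real.rpow_nonneg ha q
        nlinarith [Real.rpow_nonneg (by norm_num : (0:ℝ) ≤ 2) q]
  · calc (a + b) ^ q ≤ (2 * a) ^ q :=
        Real.rpow_le_rpow (by linarith) (by linarith) hq
      _ = 2 ^ q * a ^ q := Real.mul_rpow (by norm_num) ha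
      _ ≤ 2 ^ q * (a ^ q + b ^ q) := by
        have : (0:ℝ) ≤ b ^ q := Real.rpow_nonneg hb q
        nlinarith [Real.rpow_nonneg (by norm_num : (0:ℝ) ≤ 2) q]

/-- `g ∈ BA_r^p` iff the multiplication operator `L_g : F^{p,m} → L^{p,m}`
is bounded. -/
theorem stmt1 (m : ℕ) (p r : ℝ) (hp : 1 ≤ p) (hr : 0 < r) (g : ℂ → ℂ)
    (hΩ : MemOmega m g) (hloc : LocIntP p g) :
    MemBA p r g ↔
      ∃ C : ℝ, 0 < C ∧ ∀ h : ℂ → ℂ, Differentiable ℂ h →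
        (∫⁻ v : ℂ, ENNReal.ofReal (‖g v * h v‖ ^ p * ‖v‖ ^ ((m : ℝ) * p) *
            Real.exp (-(p / 2) * ‖v‖ ^ 2)))
          ≤ ENNReal.ofReal C *
            ∫⁻ v : ℂ, ENNReal.ofReal (‖h v‖ ^ p * ‖v‖ ^ ((m : ℝ) * p) *
              Real.exp (-(p / 2) * ‖v‖ ^ 2)) := by
  obtain ⟨hgm, -⟩ := hΩ
  have hp0 : (0:ℝ) < p := lt_of_lt_of_le one_pos hp
  have hπr : (0:ℝ) < Real.pi * r ^ 2 := by positivity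
  have hπr0 : ENNReal.ofReal (Real.pi * r ^ 2) ≠ 0 := by
    simp only [ne_eq, ENNReal.ofReal_eq_zero, not_le]
    exact hπr
  have hmp0 : (0:ℝ) ≤ (m:ℝ) * p := by positivity
  have hGgm : Measurable fun v => ENNReal.ofReal (‖g v‖ ^ p) := by fun_prop
  -- the weight identity
  have hweight : ∀ (k : ℂ → ℂ) (v : ℂ),
      ‖k v‖ ^ p * ‖v‖ ^ ((m:ℝ) * p) = ‖v ^ m * k v‖ ^ p := by
    intro k v
    simp only [norm_mul, norm_pow]
    rw [Real.mul_rpow (pow_nonneg (norm_nonneg v) m) (norm_nonneg _),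
      ← Real.rpow_natCast (‖v‖) m, ← Real.rpow_mul (norm_nonneg v)]
    ring
  constructor
  · -- forward direction
    rintro ⟨C, hC⟩
    set C' : ℝ := max C 0 + 1 with hC'def
    have hC'0 : 0 < C' := by
      have := le_max_right C 0
      simp only [hC'def]
      linarith
    have hball : ∀ u : ℂ, (∫⁻ v in closedBall u r, ENNReal.ofReal (‖g v‖ ^ p))
        ≤ ENNReal.ofReal (C' * (Real.pi * r ^ 2)) := by
      intro u
      have h1 := hC u
      rw [ENNReal.div_le_iff hπr0 ENNReal.ofReal_ne_top] at h1
      calc (∫⁻ v in closedBall u r, ENNReal.ofReal (‖g v‖ ^ p))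
          ≤ ENNReal.ofReal C * ENNReal.ofReal (Real.pi * r ^ 2) := h1
        _ ≤ ENNReal.ofReal C' * ENNReal.ofReal (Real.pi * r ^ 2) := by
            have hCC' : C ≤ C' := by
              rw [hC'def]
              linarith [le_max_left C 0]
            exact mul_le_mul_left (ENNReal.ofReal_le_ofReal hCC') _
        _ = ENNReal.ofReal (C' * (Real.pi * r ^ 2)) :=
            (ENNReal.ofReal_mul hC'0.le).symm
    refine ⟨Real.exp (p * r ^ 2 / 2) * C', by positivity, ?_⟩
    intro h hdiff
    set F : ℂ → ℂ := fun v => v ^ m * h v with hFdef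
    have hFd : Differentiable ℂ F := (differentiable_pow m).mul hdiff
    set W : ℂ → ℝ≥0∞ :=
      fun u => ENNReal.ofReal (‖F u‖ ^ p * Real.exp (-(p / 2) * ‖u‖ ^ 2)) with hWdef
    have hWm : Measurable W := by
      rw [hWdef]
      apply ENNReal.measurable_ofReal.comp
      apply Continuous.measurable
      apply Continuous.mul
      · exact (hFd.continuous.norm).rpow_const fun x => Or.inr hp0.le
      · exact (Continuous.mul continuous_const (continuous_norm.pow 2)).rexp
    have hWne : ∀ u, W u ≠ ⊤ := fun u => ENNReal.ofReal_ne_top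
    have hRHS : (∫⁻ v : ℂ, ENNReal.ofReal (‖h v‖ ^ p * ‖v‖ ^ ((m : ℝ) * p) *
        Real.exp (-(p / 2) * ‖v‖ ^ 2))) = ∫⁻ v, W v := by
      apply lintegral_congr
      intro v
      rw [hWdef]
      congr 1
      rw [hweight h v]
    have hLHS : (∫⁻ v : ℂ, ENNReal.ofReal (‖g v * h v‖ ^ p * ‖v‖ ^ ((m : ℝ) * p) *
        Real.exp (-(p / 2) * ‖v‖ ^ 2)))
        = ∫⁻ v, ENNReal.ofReal (‖g v‖ ^ p) * W v := by
      apply lintegral_congr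
      intro v
      rw [hWdef, ← ENNReal.ofReal_mul (Real.rpow_nonneg (norm_nonneg _) _)]
      congr 1
      rw [norm_mul, Real.mul_rpow (norm_nonneg _) (norm_nonneg _)]
      rw [mul_assoc (‖g v‖ ^ p), hweight h v]
      ring
    rw [hLHS, hRHS]
    have hkey : ∀ v, ENNReal.ofReal (Real.pi * r ^ 2) * (ENNReal.ofReal (‖g v‖ ^ p) * W v)
        ≤ ENNReal.ofReal (‖g v‖ ^ p) *
            (ENNReal.ofReal (Real.exp (p * r ^ 2 / 2)) * ∫⁻ u in closedBall v r, W u) := by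
      intro v
      rw [← mul_assoc, mul_comm (ENNReal.ofReal (Real.pi * r ^ 2)), mul_assoc]
      exact mul_le_mul_right (key_pointwise F hFd hp hr v) _
    set ψ : ℂ × ℂ → ℝ≥0∞ := fun q => if dist q.1 q.2 ≤ r then 1 else 0 with hψdef
    have hψm : Measurable ψ := by
      apply Measurable.ite _ measurable_const measurable_const
      exact (isClosed_le continuous_dist continuous_const).measurableSet
    have hball_eq : ∀ v, (∫⁻ u in closedBall v r, W u) = ∫⁻ u, W u * ψ (v, u) := by
      intro v
      rw [← lintegral_indicator measurableSet_closedBall]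
      apply lintegral_congr
      intro u
      simp only [hψdef]
      by_cases hu : u ∈ closedBall v r
      · rw [Set.indicator_of_mem hu, if_pos (by rw [dist_comm]; exact mem_closedBall.mp hu),
          mul_one]
      · rw [Set.indicator_of_notMem hu,
          if_neg (fun hcon => hu (mem_closedBall.mpr (by rw [dist_comm]; exact hcon))), mul_zero]
    have hball_eq2 : ∀ u, (∫⁻ v, ENNReal.ofReal (‖g v‖ ^ p) * ψ (v, u))
        = ∫⁻ v in closedBall u r, ENNReal.ofReal (‖g v‖ ^ p) := by
      intro u
      rw [← lintegral_indicator measurableSet_closedBall]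
      apply lintegral_congr
      intro v
      simp only [hψdef]
      by_cases hv : v ∈ closedBall u r
      · rw [Set.indicator_of_mem hv, if_pos (mem_closedBall.mp hv), mul_one]
      · rw [Set.indicator_of_notMem hv,
          if_neg (fun hcon => hv (mem_closedBall.mpr hcon)), mul_zero]
    have hswap : (∫⁻ v, ∫⁻ u, ENNReal.ofReal (‖g v‖ ^ p) * (W u * ψ (v, u)))
        = ∫⁻ u, ∫⁻ v, ENNReal.ofReal (‖g v‖ ^ p) * (W u * ψ (v, u)) := by
      apply lintegral_lintegral_swap
      exact ((hGgm.comp measurable_fst).mul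
        ((hWm.comp measurable_snd).mul hψm)).aemeasurable
    have halg : ENNReal.ofReal (Real.exp (p * r ^ 2 / 2)) *
          ((∫⁻ u, W u) * ENNReal.ofReal (C' * (Real.pi * r ^ 2)))
        = ENNReal.ofReal (Real.pi * r ^ 2) *
          (ENNReal.ofReal (Real.exp (p * r ^ 2 / 2) * C') * ∫⁻ u, W u) := by
      rw [ENNReal.ofReal_mul hC'0.le, ENNReal.ofReal_mul (Real.exp_pos _).le]
      ring
    have chain : ENNReal.ofReal (Real.pi * r ^ 2) * ∫⁻ v, ENNReal.ofReal (‖g v‖ ^ p) * W v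
        ≤ ENNReal.ofReal (Real.pi * r ^ 2) *
          (ENNReal.ofReal (Real.exp (p * r ^ 2 / 2) * C') * ∫⁻ u, W u) := by
      calc ENNReal.ofReal (Real.pi * r ^ 2) * ∫⁻ v, ENNReal.ofReal (‖g v‖ ^ p) * W v
          = ∫⁻ v, ENNReal.ofReal (Real.pi * r ^ 2) * (ENNReal.ofReal (‖g v‖ ^ p) * W v) :=
            (lintegral_const_mul' _ _ ENNReal.ofReal_ne_top).symm
        _ ≤ ∫⁻ v, ENNReal.ofReal (‖g v‖ ^ p) *
              (ENNReal.ofReal (Real.exp (p * r ^ 2 / 2)) * ∫⁻ u in closedBall v r, W u) :=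
            lintegral_mono hkey
        _ = ENNReal.ofReal (Real.exp (p * r ^ 2 / 2)) *
              ∫⁻ v, ∫⁻ u, ENNReal.ofReal (‖g v‖ ^ p) * (W u * ψ (v, u)) := by
            rw [← lintegral_const_mul' _ _ ENNReal.ofReal_ne_top]
            apply lintegral_congr
            intro v
            rw [hball_eq v,
              lintegral_const_mul' (ENNReal.ofReal (‖g v‖ ^ p)) _ ENNReal.ofReal_ne_top]
            ring
        _ = ENNReal.ofReal (Real.exp (p * r ^ 2 / 2)) *
              ∫⁻ u, ∫⁻ v, ENNReal.ofReal (‖g v‖ ^ p) * (W u * ψ (v, u)) := by rw [hswap]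
        _ = ENNReal.ofReal (Real.exp (p * r ^ 2 / 2)) *
              ∫⁻ u, W u * ∫⁻ v, ENNReal.ofReal (‖g v‖ ^ p) * ψ (v, u) := by
            congr 1
            apply lintegral_congr
            intro u
            rw [← lintegral_const_mul' (W u) _ (hWne u)]
            apply lintegral_congr
            intro v
            ring
        _ ≤ ENNReal.ofReal (Real.exp (p * r ^ 2 / 2)) *
              ∫⁻ u, W u * ENNReal.ofReal (C' * (Real.pi * r ^ 2)) := by
            gcongr with u
            rw [hball_eq2 u]
            exact hball u
        _ = ENNReal.ofReal (Real.exp (p * r ^ 2 / 2)) *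
              ((∫⁻ u, W u) * ENNReal.ofReal (C' * (Real.pi * r ^ 2))) := by
            rw [lintegral_mul_const' _ _ ENNReal.ofReal_ne_top]
        _ = _ := halg
    exact (ENNReal.mul_le_mul_iff_right hπr0 ENNReal.ofReal_ne_top).mp chain
  · -- backward direction
    rintro ⟨C, hCpos, hC⟩
    have hG1 : (∫⁻ w : ℂ, ENNReal.ofReal (‖w‖ ^ ((m:ℝ)*p) *
        Real.exp (-(p/2) * ‖w‖ ^ 2))) < ⊤ :=
      gauss_rpow_finite _ _ hmp0 (half_pos hp0)
    have hG2 : (∫⁻ w : ℂ, ENNReal.ofReal (Real.exp (-(p/2) * ‖w‖ ^ 2))) < ⊤ :=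
      gauss_finite _ (half_pos hp0)
    set G1 : ℝ≥0∞ := ∫⁻ w : ℂ, ENNReal.ofReal (‖w‖ ^ ((m:ℝ)*p) *
        Real.exp (-(p/2) * ‖w‖ ^ 2)) with hG1def
    set G2 : ℝ≥0∞ := ∫⁻ w : ℂ, ENNReal.ofReal (Real.exp (-(p/2) * ‖w‖ ^ 2)) with hG2def
    set E : ℝ≥0∞ := ENNReal.ofReal (2 ^ ((m:ℝ)*p)) * (G1 + G2) with hEdef
    have hEne : E ≠ ⊤ := by
      rw [hEdef]
      exact (ENNReal.mul_lt_top ENNReal.ofReal_lt_top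
        (ENNReal.add_lt_top.mpr ⟨hG1, hG2⟩)).ne
    set R0 : ℝ := max 1 (2*r) with hR0def
    set D1 : ℝ := C * (2 ^ ((m:ℝ)*p) * Real.exp (p/2*r^2)) * E.toReal with hD1def
    set D2 : ℝ := (∫⁻ v in closedBall (0:ℂ) (R0 + r), ENNReal.ofReal (‖g v‖ ^ p)).toReal
      with hD2def
    have hsmallint : (∫⁻ v in closedBall (0:ℂ) (R0 + r), ENNReal.ofReal (‖g v‖ ^ p)) < ⊤ :=
      (hloc _ (isCompact_closedBall _ _)).lintegral_lt_top
    -- the large |z| case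
    have hlarge : ∀ z : ℂ, R0 ≤ ‖z‖ →
        (∫⁻ v in closedBall z r, ENNReal.ofReal (‖g v‖ ^ p)) ≤ ENNReal.ofReal D1 := by
      intro z hz
      have hz1 : (1:ℝ) ≤ ‖z‖ := le_trans (le_max_left _ _) hz
      have hz2r : 2*r ≤ ‖z‖ := le_trans (le_max_right _ _) hz
      have hzpos : (0:ℝ) < ‖z‖ := lt_of_lt_of_le one_pos hz1
      set hz_fun : ℂ → ℂ := fun v => Complex.exp ((starRingEnd ℂ) z * v) with hzfdef
      have hhd : Differentiable ℂ hz_fun := (differentiable_id.const_mul _).cexp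
      have hCz := hC hz_fun hhd
      set κ : ℝ := (‖z‖ / 2) ^ ((m:ℝ)*p) *
        (Real.exp (p/2 * ‖z‖^2) * Real.exp (-(p/2) * r^2)) with hκdef
      have hκpos : 0 < κ := by
        rw [hκdef]
        positivity
      -- exponent computation
      have hexpid : ∀ v : ℂ, ‖hz_fun v‖ ^ p * Real.exp (-(p/2) * ‖v‖ ^ 2)
          = Real.exp (p/2 * ‖z‖^2) * Real.exp (-(p/2) * ‖v - z‖^2) := by
        intro v
        have h1 : ‖hz_fun v‖ = Real.exp (((starRingEnd ℂ) z * v).re) := by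
          simp only [hzfdef, Complex.norm_exp]
        rw [h1, ← Real.exp_mul, ← Real.exp_add, ← Real.exp_add]
        congr 1
        have h2 := abs_sub_sq' v z
        rw [show ((starRingEnd ℂ) z * v).re = ‖v‖ ^ 2 / 2 + ‖z‖ ^2 / 2
            - ‖v - z‖ ^ 2 / 2 by linarith [h2]]
        ring
      -- lower bound on the ball
      have hpoint : ∀ v ∈ closedBall z r,
          ENNReal.ofReal κ * ENNReal.ofReal (‖g v‖ ^ p)
          ≤ ENNReal.ofReal (‖g v * hz_fun v‖ ^ p * ‖v‖ ^ ((m:ℝ)*p) *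
              Real.exp (-(p/2) * ‖v‖ ^ 2)) := by
        intro v hv
        rw [← ENNReal.ofReal_mul hκpos.le]
        apply ENNReal.ofReal_le_ofReal
        have hvz : ‖v - z‖ ≤ r := by
          rw [mem_closedBall, dist_eq_norm] at hv
          simpa using hv
        have hvlow : ‖z‖ / 2 ≤ ‖v‖ := by
          have h3 : ‖z‖ ≤ ‖v‖ + ‖z - v‖ := by
            calc ‖z‖ = ‖v + (z - v)‖ := by ring_nf
              _ ≤ ‖v‖ + ‖z - v‖ := norm_add_le _ _
          have h4 : ‖z - v‖ ≤ r := by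
            rw [← neg_sub, norm_neg]
            exact hvz
          linarith
        have hbr1 : (‖z‖ / 2) ^ ((m:ℝ)*p) ≤ ‖v‖ ^ ((m:ℝ)*p) :=
          Real.rpow_le_rpow (by positivity) hvlow hmp0
        have hbr2 : Real.exp (-(p/2) * r^2) ≤ Real.exp (-(p/2) * ‖v - z‖^2) := by
          apply Real.exp_le_exp.2
          have : ‖v - z‖ ^ 2 ≤ r ^ 2 := by
            nlinarith [norm_nonneg (v - z)]
          nlinarith [hp0]
        calc κ * ‖g v‖ ^ p
            ≤ (‖v‖ ^ ((m:ℝ)*p) *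
                (Real.exp (p/2 * ‖z‖^2) * Real.exp (-(p/2) * ‖v - z‖^2)))
                * ‖g v‖ ^ p := by
              apply mul_le_mul_of_nonneg_right _ (Real.rpow_nonneg (norm_nonneg _) _)
              rw [hκdef]
              apply mul_le_mul hbr1 _ (by positivity) (Real.rpow_nonneg (by positivity) _)
              exact mul_le_mul_of_nonneg_left hbr2 (Real.exp_pos _).le
          _ = ‖g v * hz_fun v‖ ^ p * ‖v‖ ^ ((m:ℝ)*p) *
                Real.exp (-(p/2) * ‖v‖ ^ 2) := by
              rw [norm_mul, Real.mul_rpow (norm_nonneg _) (norm_nonneg _)]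
              first
              | linear_combination (-(‖g v‖ ^ p * ‖v‖ ^ ((m:ℝ)*p))) * hexpid v
              | linear_combination (‖g v‖ ^ p * ‖v‖ ^ ((m:ℝ)*p)) * hexpid v
      have hlow : ENNReal.ofReal κ * (∫⁻ v in closedBall z r, ENNReal.ofReal (‖g v‖ ^ p))
          ≤ ∫⁻ v : ℂ, ENNReal.ofReal (‖g v * hz_fun v‖ ^ p * ‖v‖ ^ ((m:ℝ)*p) *
              Real.exp (-(p/2) * ‖v‖ ^ 2)) := by
        calc ENNReal.ofReal κ * (∫⁻ v in closedBall z r, ENNReal.ofReal (‖g v‖ ^ p))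
            = ∫⁻ v in closedBall z r, ENNReal.ofReal κ * ENNReal.ofReal (‖g v‖ ^ p) :=
              (lintegral_const_mul' _ _ ENNReal.ofReal_ne_top).symm
          _ ≤ ∫⁻ v in closedBall z r, ENNReal.ofReal (‖g v * hz_fun v‖ ^ p *
                ‖v‖ ^ ((m:ℝ)*p) * Real.exp (-(p/2) * ‖v‖ ^ 2)) := by
              apply lintegral_mono_ae
              rw [ae_restrict_iff' measurableSet_closedBall]
              exact Filter.Eventually.of_forall hpoint
          _ ≤ _ := setLIntegral_le_lintegral _ _
      -- upper bound on the test function integral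
      have hup : (∫⁻ v : ℂ, ENNReal.ofReal (‖hz_fun v‖ ^ p * ‖v‖ ^ ((m:ℝ)*p) *
          Real.exp (-(p/2) * ‖v‖ ^ 2)))
          ≤ ENNReal.ofReal (Real.exp (p/2 * ‖z‖^2)) *
            (ENNReal.ofReal (‖z‖ ^ ((m:ℝ)*p)) * E) := by
        have hrw : ∀ v : ℂ, ENNReal.ofReal (‖hz_fun v‖ ^ p * ‖v‖ ^ ((m:ℝ)*p) *
            Real.exp (-(p/2) * ‖v‖ ^ 2))
            = ENNReal.ofReal (Real.exp (p/2 * ‖z‖^2)) *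
              ENNReal.ofReal (‖v‖ ^ ((m:ℝ)*p) *
                Real.exp (-(p/2) * ‖v - z‖^2)) := by
          intro v
          rw [← ENNReal.ofReal_mul (Real.exp_pos _).le]
          congr 1
          linear_combination ‖v‖ ^ ((m:ℝ)*p) * hexpid v
        simp_rw [hrw]
        rw [lintegral_const_mul' _ _ ENNReal.ofReal_ne_top]
        apply mul_le_mul_right
        -- translate
        have htr : (∫⁻ v : ℂ, ENNReal.ofReal (‖v‖ ^ ((m:ℝ)*p) *
            Real.exp (-(p/2) * ‖v - z‖^2)))
            = ∫⁻ w : ℂ, ENNReal.ofReal (‖w + z‖ ^ ((m:ℝ)*p) *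
              Real.exp (-(p/2) * ‖w‖ ^ 2)) := by
          rw [← lintegral_add_right_eq_self (fun v => ENNReal.ofReal (‖v‖ ^ ((m:ℝ)*p) *
            Real.exp (-(p/2) * ‖v - z‖^2))) z]
          apply lintegral_congr
          intro w
          simp [add_sub_cancel_right]
        rw [htr]
        have hone : (1:ℝ≥0∞) ≤ ENNReal.ofReal (‖z‖ ^ ((m:ℝ)*p)) := by
          rw [← ENNReal.ofReal_one]
          apply ENNReal.ofReal_le_ofReal
          calc (1:ℝ) = 1 ^ ((m:ℝ)*p) := (Real.one_rpow _).symm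
            _ ≤ ‖z‖ ^ ((m:ℝ)*p) := Real.rpow_le_rpow zero_le_one hz1 hmp0
        calc (∫⁻ w : ℂ, ENNReal.ofReal (‖w + z‖ ^ ((m:ℝ)*p) *
            Real.exp (-(p/2) * ‖w‖ ^ 2)))
            ≤ ∫⁻ w : ℂ, ENNReal.ofReal (2 ^ ((m:ℝ)*p) *
              ((‖w‖ ^ ((m:ℝ)*p) + ‖z‖ ^ ((m:ℝ)*p)) *
                Real.exp (-(p/2) * ‖w‖ ^ 2))) := by
              apply lintegral_mono
              intro w
              apply ENNReal.ofReal_le_ofReal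
              rw [← mul_assoc]
              apply mul_le_mul_of_nonneg_right _ (Real.exp_pos _).le
              calc ‖w + z‖ ^ ((m:ℝ)*p)
                  ≤ (‖w‖ + ‖z‖) ^ ((m:ℝ)*p) :=
                    Real.rpow_le_rpow (norm_nonneg _) (norm_add_le _ _) hmp0
                _ ≤ 2 ^ ((m:ℝ)*p) * (‖w‖ ^ ((m:ℝ)*p) + ‖z‖ ^ ((m:ℝ)*p)) :=
                    add_rpow_le _ _ _ (norm_nonneg _) (norm_nonneg _) hmp0
          _ = ENNReal.ofReal (2 ^ ((m:ℝ)*p)) * (G1 + ENNReal.ofReal (‖z‖ ^ ((m:ℝ)*p)) * G2) := by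
              have hsplit : ∀ w : ℂ, ENNReal.ofReal (2 ^ ((m:ℝ)*p) *
                  ((‖w‖ ^ ((m:ℝ)*p) + ‖z‖ ^ ((m:ℝ)*p)) *
                    Real.exp (-(p/2) * ‖w‖ ^ 2)))
                  = ENNReal.ofReal (2 ^ ((m:ℝ)*p)) *
                    (ENNReal.ofReal (‖w‖ ^ ((m:ℝ)*p) *
                      Real.exp (-(p/2) * ‖w‖ ^ 2)) +
                     ENNReal.ofReal (‖z‖ ^ ((m:ℝ)*p)) *
                      ENNReal.ofReal (Real.exp (-(p/2) * ‖w‖ ^ 2))) := by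
                intro w
                rw [← ENNReal.ofReal_mul (Real.rpow_nonneg (norm_nonneg _) _),
                  ← ENNReal.ofReal_add (by positivity) (by positivity),
                  ← ENNReal.ofReal_mul (by positivity)]
                congr 1
                ring
              simp_rw [hsplit]
              rw [lintegral_const_mul' _ _ ENNReal.ofReal_ne_top]
              congr 1
              have hmes1 : Measurable fun w : ℂ => ENNReal.ofReal (‖w‖ ^ ((m:ℝ)*p) *
                  Real.exp (-(p/2) * ‖w‖ ^ 2)) :=
                (((continuous_norm.rpow_const fun x => Or.inr hmp0).mul
                  ((continuous_const.mul (continuous_norm.pow 2)).rexp)).measurable).ennreal_ofReal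
              rw [lintegral_add_left hmes1]
              congr 1
              rw [lintegral_const_mul' _ _ ENNReal.ofReal_ne_top]
          _ ≤ ENNReal.ofReal (‖z‖ ^ ((m:ℝ)*p)) * E := by
              rw [hEdef]
              rw [show ENNReal.ofReal (‖z‖ ^ ((m:ℝ)*p)) *
                  (ENNReal.ofReal (2 ^ ((m:ℝ)*p)) * (G1 + G2))
                  = ENNReal.ofReal (2 ^ ((m:ℝ)*p)) *
                    (ENNReal.ofReal (‖z‖ ^ ((m:ℝ)*p)) * G1 +
                     ENNReal.ofReal (‖z‖ ^ ((m:ℝ)*p)) * G2) by ring]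
              apply mul_le_mul_right
              apply add_le_add_left
              calc G1 = 1 * G1 := (one_mul _).symm
                _ ≤ ENNReal.ofReal (‖z‖ ^ ((m:ℝ)*p)) * G1 :=
                  mul_le_mul_left hone _
      -- combine
      have hident : ENNReal.ofReal (Real.exp (p/2 * ‖z‖^2)) *
          ENNReal.ofReal (‖z‖ ^ ((m:ℝ)*p))
          = ENNReal.ofReal κ * ENNReal.ofReal (2 ^ ((m:ℝ)*p) * Real.exp (p/2*r^2)) := by
        rw [← ENNReal.ofReal_mul (Real.exp_pos _).le, ← ENNReal.ofReal_mul hκpos.le]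
        congr 1
        have h2ne : ((2:ℝ) ^ ((m:ℝ)*p)) ≠ 0 := by positivity
        have hee : Real.exp (-(p/2) * r^2) * Real.exp (p/2*r^2) = 1 := by
          rw [← Real.exp_add, show -(p/2) * r^2 + p/2*r^2 = 0 by ring, Real.exp_zero]
        have hexpand : ‖z‖ ^ ((m:ℝ)*p) / 2 ^ ((m:ℝ)*p) *
            (Real.exp (p/2 * ‖z‖^2) * Real.exp (-(p/2) * r^2)) *
            (2 ^ ((m:ℝ)*p) * Real.exp (p/2*r^2))
            = (‖z‖ ^ ((m:ℝ)*p) * (2 ^ ((m:ℝ)*p) / 2 ^ ((m:ℝ)*p))) *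
              (Real.exp (p/2 * ‖z‖^2) *
                (Real.exp (-(p/2) * r^2) * Real.exp (p/2*r^2))) := by ring
        rw [hκdef, Real.div_rpow (norm_nonneg z) (by norm_num : (0:ℝ) ≤ 2), hexpand,
          div_self h2ne, hee, mul_one, mul_one]
        ring
      have hfinal : ENNReal.ofReal κ *
          (∫⁻ v in closedBall z r, ENNReal.ofReal (‖g v‖ ^ p))
          ≤ ENNReal.ofReal κ *
            (ENNReal.ofReal (C * (2 ^ ((m:ℝ)*p) * Real.exp (p/2*r^2))) * E) := by
        calc ENNReal.ofReal κ * (∫⁻ v in closedBall z r, ENNReal.ofReal (‖g v‖ ^ p))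
            ≤ ∫⁻ v : ℂ, ENNReal.ofReal (‖g v * hz_fun v‖ ^ p * ‖v‖ ^ ((m:ℝ)*p) *
                Real.exp (-(p/2) * ‖v‖ ^ 2)) := hlow
          _ ≤ ENNReal.ofReal C * ∫⁻ v : ℂ, ENNReal.ofReal (‖hz_fun v‖ ^ p *
                ‖v‖ ^ ((m:ℝ)*p) * Real.exp (-(p/2) * ‖v‖ ^ 2)) := hCz
          _ ≤ ENNReal.ofReal C * (ENNReal.ofReal (Real.exp (p/2 * ‖z‖^2)) *
                (ENNReal.ofReal (‖z‖ ^ ((m:ℝ)*p)) * E)) := by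
              exact mul_le_mul_right hup _
          _ = ENNReal.ofReal κ *
              (ENNReal.ofReal (C * (2 ^ ((m:ℝ)*p) * Real.exp (p/2*r^2))) * E) := by
              rw [ENNReal.ofReal_mul hCpos.le]
              calc ENNReal.ofReal C * (ENNReal.ofReal (Real.exp (p/2 * ‖z‖^2)) *
                    (ENNReal.ofReal (‖z‖ ^ ((m:ℝ)*p)) * E))
                  = (ENNReal.ofReal (Real.exp (p/2 * ‖z‖^2)) *
                      ENNReal.ofReal (‖z‖ ^ ((m:ℝ)*p))) * (ENNReal.ofReal C * E) := by
                    ring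
                _ = (ENNReal.ofReal κ *
                      ENNReal.ofReal (2 ^ ((m:ℝ)*p) * Real.exp (p/2*r^2))) *
                      (ENNReal.ofReal C * E) := by rw [hident]
                _ = ENNReal.ofReal κ * (ENNReal.ofReal C *
                      ENNReal.ofReal (2 ^ ((m:ℝ)*p) * Real.exp (p/2*r^2)) * E) := by ring
      have hκ0 : ENNReal.ofReal κ ≠ 0 := by
        simp only [ne_eq, ENNReal.ofReal_eq_zero, not_le]
        exact hκpos
      have := (ENNReal.mul_le_mul_iff_right hκ0 ENNReal.ofReal_ne_top).mp hfinal
      calc (∫⁻ v in closedBall z r, ENNReal.ofReal (‖g v‖ ^ p))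
          ≤ ENNReal.ofReal (C * (2 ^ ((m:ℝ)*p) * Real.exp (p/2*r^2))) * E := this
        _ = ENNReal.ofReal D1 := by
            rw [hD1def, ENNReal.ofReal_mul
              (mul_nonneg hCpos.le (by positivity : (0:ℝ) ≤ 2 ^ ((m:ℝ)*p) * Real.exp (p/2*r^2))),
              ENNReal.ofReal_toReal hEne]
      -- done with hlarge
    have hsmall : ∀ z : ℂ, ‖z‖ < R0 →
        (∫⁻ v in closedBall z r, ENNReal.ofReal (‖g v‖ ^ p)) ≤ ENNReal.ofReal D2 := by
      intro z hz
      have hsub : closedBall z r ⊆ closedBall (0:ℂ) (R0 + r) := by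
        apply closedBall_subset_closedBall'
        have : dist z 0 = ‖z‖ := by
          simp [dist_eq_norm]
        rw [this]
        linarith
      calc (∫⁻ v in closedBall z r, ENNReal.ofReal (‖g v‖ ^ p))
          ≤ ∫⁻ v in closedBall (0:ℂ) (R0 + r), ENNReal.ofReal (‖g v‖ ^ p) :=
            lintegral_mono_set hsub
        _ = ENNReal.ofReal D2 := by
            rw [hD2def, ENNReal.ofReal_toReal hsmallint.ne]
    refine ⟨max D1 D2 / (Real.pi * r ^ 2), ?_⟩
    intro z
    have hS : (∫⁻ v in closedBall z r, ENNReal.ofReal (‖g v‖ ^ p))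
        ≤ ENNReal.ofReal (max D1 D2) := by
      rcases le_or_gt R0 (‖z‖) with hcase | hcase
      · exact (hlarge z hcase).trans (ENNReal.ofReal_le_ofReal (le_max_left _ _))
      · exact (hsmall z hcase).trans (ENNReal.ofReal_le_ofReal (le_max_right _ _))
    calc (∫⁻ v in closedBall z r, ENNReal.ofReal (‖g v‖ ^ p)) /
          ENNReal.ofReal (Real.pi * r ^ 2)
        ≤ ENNReal.ofReal (max D1 D2) / ENNReal.ofReal (Real.pi * r ^ 2) :=
          ENNReal.div_le_div_right hS _
      _ = ENNReal.ofReal (max D1 D2 / (Real.pi * r ^ 2)) :=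
          (ENNReal.ofReal_div_of_pos hπr).symm

end
end

section
/- Let m be a fixed non-negative integer, 1 ≤ p < ∞, and let g : ℂ → ℂ be locally p-integrable. Suppose there exist constants M > 0 and C > 0 such that for all z with |z| > M, (1/(π(e^{|z|²} − Q_m(|z|²)))) ∫_ℂ |g(v) − B_m g(z)|^p |e^{\bar{z}v} − Q_m(\bar{z}v)|² e^{−|v|²} dA(v) ≤ C. Then for every r > 0 there exist constants M' > 0 and C' > 0 such that for every z with |z| > M', (1/(πr²)) ∫_{B(z;r)} |g(v) − B_m g(z)|^p dA(v) ≤ C'. -/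
open MeasureTheory Metric Complex Filter
open scoped ENNReal

noncomputable section

lemma Qr_nonneg (m : ℕ) {x : ℝ} (hx : 0 ≤ x) : 0 ≤ Qr m x := by
  apply Finset.sum_nonneg; intro k _; positivity

lemma Qr_lt_exp (m : ℕ) {x : ℝ} (hx : 0 < x) : Qr m x < Real.exp x := by
  have h := Real.sum_le_exp_of_nonneg hx.le (m + 1)
  rw [Finset.sum_range_succ] at h
  have h2 : 0 < x ^ m / (Nat.factorial m : ℝ) := by positivity
  unfold Qr; linarith

lemma dz_pos (m : ℕ) {z : ℂ} (hz : z ≠ 0) : 0 < dz m z := by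
  have hx : (0:ℝ) < ‖z‖ ^ 2 := by
    have := norm_pos_iff.mpr hz; positivity
  have h := Qr_lt_exp m hx
  have hπ := Real.pi_pos
  unfold dz; nlinarith

lemma abs_Qc_le (m : ℕ) (w : ℂ) :
    ‖Qc m w‖ ≤ m * (1 + ‖w‖) ^ m := by
  have h1 : ‖Qc m w‖ ≤ ∑ k ∈ Finset.range m, (1 + ‖w‖) ^ m := by
    refine (norm_sum_le _ _).trans (Finset.sum_le_sum fun k hk => ?_)
    rw [norm_div, norm_pow, Complex.norm_natCast]
    have hf : (1:ℝ) ≤ (Nat.factorial k : ℝ) := by exact_mod_cast Nat.one_le_iff_ne_zero.mpr (Nat.factorial_pos k).ne'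
    have h2 : ‖w‖ ^ k ≤ (1 + ‖w‖) ^ k :=
      pow_le_pow_left₀ (norm_nonneg w) (by linarith) k
    have h3 : (1 + ‖w‖) ^ k ≤ (1 + ‖w‖) ^ m :=
      pow_le_pow_right₀ (by have := norm_nonneg w; linarith) (Finset.mem_range.mp hk).le
    calc ‖w‖ ^ k / (Nat.factorial k : ℝ) ≤ ‖w‖ ^ k / 1 := by
          apply div_le_div_of_nonneg_left (by positivity) one_pos hf
      _ = ‖w‖ ^ k := div_one _
      _ ≤ _ := h2.trans h3
  simpa [Finset.sum_const, Finset.card_range, nsmul_eq_mul] using h1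

lemma exp_dom (K : ℝ) (m : ℕ) :
    ∃ T : ℝ, ∀ x : ℝ, T ≤ x → 1 ≤ x → K * x ^ (2 * m) ≤ Real.exp (x ^ 2 / 2) := by
  have h1 : Tendsto (fun x : ℝ => x ^ 2 / 2) atTop atTop :=
    (tendsto_pow_atTop two_ne_zero).atTop_div_const two_pos
  have h2 := (Real.tendsto_exp_div_pow_atTop m).comp h1
  have h3 := h2.eventually_ge_atTop (K * 2 ^ m)
  rw [eventually_atTop] at h3
  obtain ⟨T, hT⟩ := h3
  refine ⟨T, fun x hxT hx1 => ?_⟩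
  have h4 : K * 2 ^ m ≤ Real.exp (x ^ 2 / 2) / (x ^ 2 / 2) ^ m := hT x hxT
  have hpos : (0:ℝ) < (x ^ 2 / 2) ^ m := by positivity
  have h5 := (le_div_iff₀ hpos).mp h4
  have h6 : K * 2 ^ m * (x ^ 2 / 2) ^ m = K * x ^ (2 * m) := by
    rw [div_pow, pow_mul]; field_simp
  linarith
lemma kw_key (m : ℕ) {r : ℝ} (hr : 0 < r) :
    ∃ M' : ℝ, 0 < M' ∧ ∀ z v : ℂ, M' < ‖z‖ → v ∈ closedBall z r →
      Real.exp (-(r ^ 2)) / (4 * Real.pi) * dz m z ≤ kw m z v := by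
  obtain ⟨T, hT⟩ := exp_dom (2 * m * 3 ^ m) m
  refine ⟨max (max T 1) (2 * r), lt_of_lt_of_le (by linarith) (le_max_right _ _), ?_⟩
  intro z v hz hv
  set x := ‖z‖ with hxdef
  have hx1 : 1 ≤ x := le_of_lt (lt_of_le_of_lt ((le_max_right T 1).trans (le_max_left _ _)) hz)
  have hxT : T ≤ x := le_of_lt (lt_of_le_of_lt ((le_max_left T 1).trans (le_max_left _ _)) hz)
  have hx2r : 2 * r ≤ x := le_of_lt (lt_of_le_of_lt (le_max_right _ _) hz)
  have hx0 : 0 < x := lt_of_lt_of_le one_pos hx1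
  set w := (starRingEnd ℂ) z * v with hwdef
  have hvz : ‖v - z‖ ≤ r := by rwa [mem_closedBall, Complex.dist_eq] at hv
  have hav : ‖v‖ ≤ x + r := by
    calc ‖v‖ = ‖z + (v - z)‖ := by ring_nf
      _ ≤ ‖z‖ + ‖v - z‖ := norm_add_le _ _
      _ ≤ x + r := by rw [← hxdef]; linarith
  have habsw : ‖w‖ ≤ 2 * x ^ 2 := by
    have h1 : ‖w‖ = x * ‖v‖ := by
      rw [hwdef, norm_mul, Complex.norm_conj]
    rw [h1]; nlinarith
  have hrew : x ^ 2 / 2 ≤ w.re := by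
    have h1 : w = (normSq z : ℂ) + (starRingEnd ℂ) z * (v - z) := by
      rw [hwdef, ← Complex.mul_conj]; ring
    have h2 : |((starRingEnd ℂ) z * (v - z)).re| ≤ x * r := by
      calc |((starRingEnd ℂ) z * (v - z)).re| ≤ ‖(starRingEnd ℂ) z * (v - z)‖ :=
            Complex.abs_re_le_norm _
        _ = x * ‖v - z‖ := by rw [norm_mul, Complex.norm_conj]
        _ ≤ x * r := by nlinarith
    have h3 : w.re = normSq z + ((starRingEnd ℂ) z * (v - z)).re := by
      rw [h1]; simp
    have h4 : normSq z = x ^ 2 := (Complex.sq_norm z).symm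
    rw [h3, h4]
    have := abs_le.mp h2
    nlinarith
  have hQ : ‖Qc m w‖ ≤ Real.exp w.re / 2 := by
    have h5 : 1 + ‖w‖ ≤ 3 * x ^ 2 := by nlinarith
    have h6 : (m : ℝ) * (1 + ‖w‖) ^ m ≤ m * (3 * x ^ 2) ^ m :=
      mul_le_mul_of_nonneg_left (pow_le_pow_left₀ (by positivity) h5 m) (Nat.cast_nonneg m)
    have h7 : (3 * x ^ 2 : ℝ) ^ m = 3 ^ m * x ^ (2 * m) := by rw [mul_pow, pow_mul]
    have hK := hT x hxT hx1
    have hmono : Real.exp (x ^ 2 / 2) ≤ Real.exp w.re := Real.exp_le_exp.mpr hrew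
    have h8 := abs_Qc_le m w
    rw [h7] at h6
    nlinarith
  have hE : Real.exp w.re / 2 ≤ ‖Complex.exp w - Qc m w‖ := by
    have tri : ‖Complex.exp w‖ ≤
        ‖Complex.exp w - Qc m w‖ + ‖Qc m w‖ := by
      calc ‖Complex.exp w‖ = ‖Complex.exp w - Qc m w + Qc m w‖ := by
            ring_nf
        _ ≤ _ := norm_add_le _ _
    rw [Complex.norm_exp] at tri
    linarith
  have hdist : 2 * w.re - ‖v‖ ^ 2 = x ^ 2 - ‖v - z‖ ^ 2 := by
    have h1 : normSq (v - z) = normSq v + normSq z - 2 * (v * (starRingEnd ℂ) z).re :=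
      Complex.normSq_sub v z
    have h2 : (v * (starRingEnd ℂ) z).re = w.re := by rw [hwdef, mul_comm]
    have e1 : ‖v - z‖ ^ 2 = normSq (v - z) := Complex.sq_norm _
    have e2 : ‖v‖ ^ 2 = normSq v := Complex.sq_norm _
    have e3 : x ^ 2 = normSq z := Complex.sq_norm _
    rw [e1, e2, e3, h1, h2]; ring
  have hkw : Real.exp (x ^ 2 - r ^ 2) / 4 ≤ kw m z v := by
    have h1 : (Real.exp w.re / 2) ^ 2 * Real.exp (-(‖v‖ ^ 2)) ≤ kw m z v := by
      unfold kw
      rw [← hwdef]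
      exact mul_le_mul_of_nonneg_right (pow_le_pow_left₀ (by positivity) hE 2) (Real.exp_nonneg _)
    have h2 : (Real.exp w.re / 2) ^ 2 * Real.exp (-(‖v‖ ^ 2))
        = Real.exp (2 * w.re - ‖v‖ ^ 2) / 4 := by
      rw [div_pow, sq (Real.exp w.re), ← Real.exp_add, div_mul_eq_mul_div, ← Real.exp_add]
      norm_num
      ring_nf
    have h3 : x ^ 2 - r ^ 2 ≤ 2 * w.re - ‖v‖ ^ 2 := by
      rw [hdist]; nlinarith [hvz, norm_nonneg (v - z), hr]
    have h4 : Real.exp (x ^ 2 - r ^ 2) ≤ Real.exp (2 * w.re - ‖v‖ ^ 2) :=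
      Real.exp_le_exp.mpr h3
    linarith
  have hlhs : Real.exp (-(r ^ 2)) / (4 * Real.pi) * dz m z ≤ Real.exp (x ^ 2 - r ^ 2) / 4 := by
    unfold dz
    rw [← hxdef]
    have hQ0 : 0 ≤ Qr m (x ^ 2) := Qr_nonneg m (by positivity)
    have hπ := Real.pi_pos
    have hexp : Real.exp (-(r ^ 2)) * Real.exp (x ^ 2) = Real.exp (x ^ 2 - r ^ 2) := by
      rw [← Real.exp_add]; ring_nf
    rw [div_mul_eq_mul_div, div_le_div_iff₀ (by positivity) (by norm_num)]
    nlinarith [Real.exp_pos (-(r ^ 2)), mul_nonneg (mul_nonneg (Real.exp_nonneg (-(r^2))) hπ.le) hQ0]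
  linarith
/-- boundedness of the Berezin-type oscillation near infinity implies
boundedness of the Euclidean-disk oscillation about `B_m g(z)` near infinity. -/
theorem stmt3 (m : ℕ) (p : ℝ) (hp : 1 ≤ p) (g : ℂ → ℂ) (hloc : LocIntP p g)
    (hyp : ∃ M > (0 : ℝ), ∃ C > (0 : ℝ), ∀ z : ℂ, M < ‖z‖ →
      (∫⁻ v : ℂ, ENNReal.ofReal (‖g v - berezin m g z‖ ^ p * kw m z v)) /
        ENNReal.ofReal (dz m z) ≤ ENNReal.ofReal C) :
    ∀ r > (0 : ℝ), ∃ M' > (0 : ℝ), ∃ C' > (0 : ℝ), ∀ z : ℂ, M' < ‖z‖ →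
      (∫⁻ v in closedBall z r, ENNReal.ofReal (‖g v - berezin m g z‖ ^ p)) /
        ENNReal.ofReal (Real.pi * r ^ 2) ≤ ENNReal.ofReal C' := by
  obtain ⟨M, hM, C, hC, hbd⟩ := hyp
  intro r hr
  obtain ⟨M₁, hM₁, hkey⟩ := kw_key m hr
  set c : ℝ := Real.exp (-(r ^ 2)) / (4 * Real.pi) with hc
  have hπ := Real.pi_pos
  have hc0 : 0 < c := by rw [hc]; positivity
  refine ⟨max M M₁, lt_max_of_lt_right hM₁, C / c / (Real.pi * r ^ 2), by positivity, ?_⟩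
  intro z hz
  have hzM : M < ‖z‖ := lt_of_le_of_lt (le_max_left _ _) hz
  have hzM₁ : M₁ < ‖z‖ := lt_of_le_of_lt (le_max_right _ _) hz
  have hz0 : z ≠ 0 := by
    intro h; rw [h] at hzM₁; simp at hzM₁; linarith
  have hdz : 0 < dz m z := dz_pos m hz0
  set b := berezin m g z with hb
  have ha0 : ∀ v : ℂ, 0 ≤ ‖g v - b‖ ^ p := fun v => Real.rpow_nonneg (norm_nonneg _) p
  have hdz0 : ENNReal.ofReal (dz m z) ≠ 0 := (ENNReal.ofReal_pos.mpr hdz).ne'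
  have h1 : (∫⁻ v : ℂ, ENNReal.ofReal (‖g v - b‖ ^ p * kw m z v))
      ≤ ENNReal.ofReal C * ENNReal.ofReal (dz m z) := by
    have h := hbd z hzM
    rw [← hb] at h
    rwa [ENNReal.div_le_iff_le_mul (Or.inl hdz0) (Or.inl ENNReal.ofReal_ne_top)] at h
  have h2 : ENNReal.ofReal (c * dz m z) * (∫⁻ v in closedBall z r, ENNReal.ofReal (‖g v - b‖ ^ p))
      ≤ ∫⁻ v : ℂ, ENNReal.ofReal (‖g v - b‖ ^ p * kw m z v) := by
    rw [← lintegral_const_mul' _ _ ENNReal.ofReal_ne_top]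
    refine le_trans ?_ (setLIntegral_le_lintegral (closedBall z r) fun v => ENNReal.ofReal (‖g v - b‖ ^ p * kw m z v))
    refine lintegral_mono_ae (ae_restrict_of_forall_mem measurableSet_closedBall ?_)
    intro v hv
    rw [← ENNReal.ofReal_mul (by positivity)]
    apply ENNReal.ofReal_le_ofReal
    have hk := hkey z v hzM₁ hv
    calc c * dz m z * ‖g v - b‖ ^ p ≤ kw m z v * ‖g v - b‖ ^ p :=
          mul_le_mul_of_nonneg_right hk (ha0 v)
      _ = ‖g v - b‖ ^ p * kw m z v := mul_comm _ _
  have h3 := h2.trans h1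
  have h4 : (∫⁻ v in closedBall z r, ENNReal.ofReal (‖g v - b‖ ^ p)) ≤ ENNReal.ofReal (C / c) := by
    rw [ENNReal.ofReal_mul hc0.le] at h3
    have h5 : ENNReal.ofReal (dz m z) *
        (ENNReal.ofReal c * ∫⁻ v in closedBall z r, ENNReal.ofReal (‖g v - b‖ ^ p))
        ≤ ENNReal.ofReal (dz m z) * ENNReal.ofReal C := by
      calc ENNReal.ofReal (dz m z) *
          (ENNReal.ofReal c * ∫⁻ v in closedBall z r, ENNReal.ofReal (‖g v - b‖ ^ p))
          = ENNReal.ofReal c * ENNReal.ofReal (dz m z) *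
            ∫⁻ v in closedBall z r, ENNReal.ofReal (‖g v - b‖ ^ p) := by ring
        _ ≤ ENNReal.ofReal C * ENNReal.ofReal (dz m z) := h3
        _ = ENNReal.ofReal (dz m z) * ENNReal.ofReal C := mul_comm _ _
    have h6 := (ENNReal.mul_le_mul_iff_right hdz0 ENNReal.ofReal_ne_top).mp h5
    rw [ENNReal.ofReal_div_of_pos hc0,
      ENNReal.le_div_iff_mul_le (Or.inl (ENNReal.ofReal_pos.mpr hc0).ne')
        (Or.inl ENNReal.ofReal_ne_top)]
    calc (∫⁻ v in closedBall z r, ENNReal.ofReal (‖g v - b‖ ^ p)) * ENNReal.ofReal c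
        = ENNReal.ofReal c * ∫⁻ v in closedBall z r, ENNReal.ofReal (‖g v - b‖ ^ p) :=
          mul_comm _ _
      _ ≤ ENNReal.ofReal C := h6
  calc (∫⁻ v in closedBall z r, ENNReal.ofReal (‖g v - b‖ ^ p)) / ENNReal.ofReal (Real.pi * r ^ 2)
      ≤ ENNReal.ofReal (C / c) / ENNReal.ofReal (Real.pi * r ^ 2) :=
        ENNReal.div_le_div_right h4 _
    _ = ENNReal.ofReal (C / c / (Real.pi * r ^ 2)) :=
        (ENNReal.ofReal_div_of_pos (by positivity)).symm
end
end

section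
/- Let m be a fixed non-negative integer, 1 ≤ p < ∞ and r > 0, and let g : ℂ → ℂ be a continuous function with g ∈ BO_r. Then the Hankel operator H_g is bounded on F^{p,m}: there exists C > 0 such that for every entire function f with ‖f‖_{p,m} < ∞, the function H_g f defined by H_g f(z) = (1/π) ∫_ℂ (g(z) − g(v)) f(v) \overline{K_z^m(v)} |v|^{2m} e^{−|v|²} dA(v) satisfies ‖H_g f‖_{p,m} ≤ C ‖f‖_{p,m}. -/
open MeasureTheory Metric Complex Filter
open scoped ENNReal

noncomputable section

lemma kker_id (m : ℕ) (z v : ℂ) :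
    ((starRingEnd ℂ) z * v) ^ m * Kker m z v
      = (Nat.factorial m : ℂ) * (Complex.exp ((starRingEnd ℂ) z * v)
          - Qc m ((starRingEnd ℂ) z * v)) := by
  set w := (starRingEnd ℂ) z * v with hw
  have hsum : Summable (fun n : ℕ => w ^ n / (n.factorial : ℂ)) :=
    NormedSpace.expSeries_div_summable w
  have hexp : Complex.exp w = ∑' n : ℕ, w ^ n / (n.factorial : ℂ) := by
    rw [Complex.exp_eq_exp_ℂ, NormedSpace.exp_eq_tsum_div]
  have h1 : ∑' k : ℕ, w ^ (k + m) / ((k + m).factorial : ℂ)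
      = Complex.exp w - Qc m w := by
    have h2 := Summable.sum_add_tsum_nat_add m hsum
    rw [hexp, Qc]
    linear_combination h2
  calc w ^ m * Kker m z v
      = ∑' k : ℕ, w ^ m * (((m.factorial : ℂ) / ((k + m).factorial : ℂ)) * w ^ k) :=
        (tsum_mul_left).symm
    _ = ∑' k : ℕ, (m.factorial : ℂ) * (w ^ (k + m) / ((k + m).factorial : ℂ)) := by
        congr 1; funext k
        have : ((k + m).factorial : ℂ) ≠ 0 := Nat.cast_ne_zero.2 (Nat.factorial_ne_zero _)
        field_simp
        ring
    _ = (m.factorial : ℂ) * ∑' k : ℕ, w ^ (k + m) / ((k + m).factorial : ℂ) := tsum_mul_left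
    _ = _ := by rw [h1]

lemma re_sub (z v : ℂ) : ((starRingEnd ℂ) z * v).re - (‖z‖^2 + ‖v‖^2)/2
    = -(‖z - v‖)^2/2 := by
  simp only [Complex.sq_norm, Complex.normSq_apply, Complex.mul_re, Complex.conj_re,
    Complex.conj_im, Complex.sub_re, Complex.sub_im]
  ring

lemma qr_le (m : ℕ) {t : ℝ} (ht : 0 ≤ t) : Qr m t ≤ 2 ^ m * Real.exp (t/2) := by
  have hterm : ∀ k : ℕ, t ^ k / (k.factorial : ℝ) ≤ 2 ^ k * Real.exp (t/2) := by
    intro k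
    have h1 : (t/2) ^ k / (k.factorial : ℝ) ≤ Real.exp (t/2) := by
      refine le_trans ?_ (Real.sum_le_exp_of_nonneg (by positivity) (k+1))
      refine Finset.single_le_sum (f := fun i => (t/2) ^ i / (i.factorial : ℝ))
        (fun i _ => by positivity) (Finset.self_mem_range_succ k)
    have h2 : t ^ k / (k.factorial : ℝ) = 2 ^ k * ((t/2) ^ k / (k.factorial : ℝ)) := by
      rw [div_pow]
      field_simp
    rw [h2]
    exact mul_le_mul_of_nonneg_left h1 (by positivity)
  calc Qr m t ≤ ∑ k ∈ Finset.range m, 2 ^ k * Real.exp (t/2) :=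
        Finset.sum_le_sum (fun k _ => hterm k)
    _ = (∑ k ∈ Finset.range m, (2:ℝ) ^ k) * Real.exp (t/2) := by
        rw [Finset.sum_mul]
    _ ≤ 2 ^ m * Real.exp (t/2) := by
        have : (∑ k ∈ Finset.range m, (2:ℝ) ^ k) = 2 ^ m - 1 := by
          rw [geom_sum_eq (by norm_num)]; norm_num
        rw [this]
        nlinarith [Real.exp_pos (t/2)]

lemma qr_mono (m : ℕ) {a b : ℝ} (ha : 0 ≤ a) (hab : a ≤ b) : Qr m a ≤ Qr m b := by
  refine Finset.sum_le_sum (fun k _ => ?_)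
  exact div_le_div_of_nonneg_right (pow_le_pow_left₀ ha hab k) (by positivity)

lemma kker_bound (m : ℕ) (z v : ℂ) :
    ‖z‖ ^ m * ‖v‖ ^ m
        * Real.exp (-(‖z‖ ^ 2 + ‖v‖ ^ 2) / 2) * ‖Kker m z v‖
    ≤ ((m.factorial : ℝ) * 2 ^ m)
        * (Real.exp (-(‖z‖ ^ 2 + ‖v‖ ^ 2) / 4)
            + Real.exp (-(‖z - v‖) ^ 2 / 2)) := by
  set w := (starRingEnd ℂ) z * v with hw
  set t := (‖z‖ ^ 2 + ‖v‖ ^ 2) / 2 with htdef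
  have ht : 0 ≤ t := by positivity
  have habsw : ‖w‖ = ‖z‖ * ‖v‖ := by
    rw [hw, norm_mul, Complex.norm_conj]
  have hwt : ‖w‖ ≤ t := by
    rw [habsw, htdef]
    nlinarith [sq_nonneg (‖z‖ - ‖v‖)]
  have key : ‖z‖ ^ m * ‖v‖ ^ m * ‖Kker m z v‖
      = (m.factorial : ℝ) * ‖Complex.exp w - Qc m w‖ := by
    have : ‖z‖ ^ m * ‖v‖ ^ m * ‖Kker m z v‖
        = ‖w ^ m * Kker m z v‖ := by
      rw [norm_mul, norm_pow, habsw]; ring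
    rw [this, kker_id, norm_mul, Complex.norm_natCast]
  have hQ : ‖Qc m w‖ ≤ Qr m t := by
    refine le_trans (norm_sum_le _ _) ?_
    refine le_trans (Finset.sum_le_sum (fun k _ => ?_)) (le_refl (Qr m t))
    rw [norm_div, norm_pow, Complex.norm_natCast]
    exact div_le_div_of_nonneg_right (pow_le_pow_left₀ (norm_nonneg w) hwt k)
      (by positivity)
  have hexp : ‖Complex.exp w - Qc m w‖ ≤ Real.exp w.re + Qr m t := by
    refine le_trans (norm_sub_le _ _) ?_
    rw [Complex.norm_exp]
    exact add_le_add le_rfl hQ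
  have e1 : Real.exp w.re * Real.exp (-t) = Real.exp (-(‖z - v‖) ^ 2 / 2) := by
    rw [← Real.exp_add]
    congr 1
    have h := re_sub z v
    rw [hw, htdef]
    linarith [h]
  have e2 : Qr m t * Real.exp (-t) ≤ 2 ^ m * Real.exp (-t/2) := by
    calc Qr m t * Real.exp (-t) ≤ (2 ^ m * Real.exp (t/2)) * Real.exp (-t) :=
          mul_le_mul_of_nonneg_right (qr_le m ht) (Real.exp_pos _).le
      _ = 2 ^ m * Real.exp (-t/2) := by rw [mul_assoc, ← Real.exp_add]; ring_nf
  have hfac : (1:ℝ) ≤ (m.factorial : ℝ) := by exact_mod_cast Nat.one_le_iff_ne_zero.2 (Nat.factorial_ne_zero m)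
  calc ‖z‖ ^ m * ‖v‖ ^ m * Real.exp (-(‖z‖ ^ 2 + ‖v‖ ^ 2) / 2)
          * ‖Kker m z v‖
      = ((m.factorial : ℝ) * ‖Complex.exp w - Qc m w‖) * Real.exp (-t) := by
        rw [← key, htdef, neg_div]; ring
    _ ≤ ((m.factorial : ℝ) * (Real.exp w.re + Qr m t)) * Real.exp (-t) := by
        apply mul_le_mul_of_nonneg_right _ (Real.exp_pos _).le
        exact mul_le_mul_of_nonneg_left hexp (by positivity)
    _ = (m.factorial : ℝ) * (Real.exp w.re * Real.exp (-t) + Qr m t * Real.exp (-t)) := by ring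
    _ ≤ (m.factorial : ℝ) * (Real.exp (-(‖z - v‖) ^ 2 / 2) + 2 ^ m * Real.exp (-t/2)) := by
        apply mul_le_mul_of_nonneg_left _ (by positivity)
        rw [e1]
        exact add_le_add le_rfl e2
    _ ≤ ((m.factorial : ℝ) * 2 ^ m) * (Real.exp (-(‖z‖ ^ 2 + ‖v‖ ^ 2) / 4)
            + Real.exp (-(‖z - v‖) ^ 2 / 2)) := by
        have h2m : (1:ℝ) ≤ 2 ^ m := one_le_pow₀ (by norm_num)
        have hth : -t/2 = -(‖z‖ ^ 2 + ‖v‖ ^ 2) / 4 := by rw [htdef]; ring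
        rw [← hth]
        have hE2 : Real.exp (-(‖z - v‖) ^ 2 / 2)
            ≤ 2 ^ m * Real.exp (-(‖z - v‖) ^ 2 / 2) :=
          le_mul_of_one_le_left (Real.exp_pos _).le h2m
        calc (m.factorial : ℝ) * (Real.exp (-(‖z - v‖) ^ 2 / 2) + 2 ^ m * Real.exp (-t/2))
            ≤ (m.factorial : ℝ) * (2 ^ m * Real.exp (-(‖z - v‖) ^ 2 / 2)
                + 2 ^ m * Real.exp (-t/2)) :=
              mul_le_mul_of_nonneg_left (add_le_add hE2 le_rfl) (by positivity)
          _ = ((m.factorial : ℝ) * 2 ^ m) * (Real.exp (-t/2)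
                + Real.exp (-(‖z - v‖) ^ 2 / 2)) := by ring



lemma bo_growth {r : ℝ} (hr : 0 < r) {g : ℂ → ℂ} {C0 : ℝ}
    (h : ∀ z : ℂ, ∀ v ∈ closedBall z r, ‖g v - g z‖ ≤ C0) :
    ∀ z v : ℂ, ‖g z - g v‖ ≤ (C0 * max 1 r⁻¹) * (1 + dist z v) := by
  have hC0 : 0 ≤ C0 := le_trans (by simp) (h 0 0 (by simp [hr.le]))
  have claim : ∀ n : ℕ, ∀ z v : ℂ, dist z v ≤ n * r → ‖g v - g z‖ ≤ n * C0 := by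
    intro n
    induction n with
    | zero =>
      intro z v hd
      simp only [Nat.cast_zero, zero_mul] at hd ⊢
      have : z = v := by
        have := dist_nonneg (x := z) (y := v)
        have : dist z v = 0 := le_antisymm hd this
        exact dist_eq_zero.1 this
      simp [this]
    | succ n ih =>
      intro z v hd
      by_cases hcase : dist z v ≤ r
      · have := h z v (mem_closedBall.2 (by rwa [dist_comm]))
        push_cast
        calc ‖g v - g z‖ ≤ C0 := this
          _ ≤ (n + 1) * C0 := le_mul_of_one_le_left hC0 (by linarith [Nat.cast_nonneg (α := ℝ) n])
      · push_neg at hcase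
        have hd0 : 0 < dist z v := lt_trans hr hcase
        set d := dist z v with hdd
        set s := r / d with hs
        have hs0 : 0 < s := div_pos hr hd0
        have hs1 : s ≤ 1 := by rw [hs, div_le_one hd0]; exact hcase.le
        set w := v + s • (z - v) with hwdef
        have hnorm : ‖z - v‖ = d := by rw [hdd, dist_eq_norm]
        have hwv : dist v w = r := by
          rw [dist_eq_norm, hwdef]
          have : v - (v + s • (z - v)) = (-s) • (z - v) := by module
          rw [this, norm_smul, norm_neg]
          simp only [Real.norm_of_nonneg hs0.le]
          rw [hnorm, hs]
          field_simp
        have hzw : dist z w ≤ n * r := by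
          rw [dist_eq_norm, hwdef]
          have : z - (v + s • (z - v)) = (1 - s) • (z - v) := by module
          rw [this, norm_smul]
          simp only [Real.norm_of_nonneg (by linarith : (0:ℝ) ≤ 1 - s)]
          rw [hnorm]
          have he : (1 - s) * d = d - r := by rw [hs]; field_simp
          rw [he]
          have : d ≤ (n + 1) * r := by push_cast at hd; linarith [hd]
          linarith
        have h1 : ‖g v - g w‖ ≤ C0 := h w v (mem_closedBall.2 (by rw [dist_comm] at hwv ⊢; exact hwv.le))
        have h2 : ‖g w - g z‖ ≤ n * C0 := ih z w hzw
        calc ‖g v - g z‖ = ‖(g v - g w) + (g w - g z)‖ := by ring_nf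
          _ ≤ ‖g v - g w‖ + ‖g w - g z‖ := norm_add_le _ _
          _ ≤ C0 + n * C0 := add_le_add h1 h2
          _ = (n + 1 : ℕ) * C0 := by push_cast; ring
  intro z v
  set d := dist z v with hdd
  have hd0 : 0 ≤ d := dist_nonneg
  set n := ⌈d / r⌉₊ with hn
  have h1 : d ≤ n * r := by
    rw [← div_le_iff₀ hr]
    exact Nat.le_ceil _
  have h2 : (n : ℝ) ≤ d / r + 1 := (Nat.ceil_lt_add_one (by positivity)).le
  have h3 : ‖g v - g z‖ ≤ n * C0 := claim n z v h1
  rw [norm_sub_rev]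
  calc ‖g v - g z‖ ≤ n * C0 := h3
    _ ≤ (d / r + 1) * C0 := mul_le_mul_of_nonneg_right h2 hC0
    _ ≤ (C0 * max 1 r⁻¹) * (1 + d) := by
      have hm1 : (1:ℝ) ≤ max 1 r⁻¹ := le_max_left _ _
      have hm2 : r⁻¹ ≤ max 1 r⁻¹ := le_max_right _ _
      have : d / r = d * r⁻¹ := div_eq_mul_inv d r
      rw [this]
      have hmax0 : (0:ℝ) ≤ max 1 r⁻¹ := by positivity
      nlinarith [mul_le_mul_of_nonneg_left hm2 (mul_nonneg hC0 hd0),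
        mul_le_mul_of_nonneg_left hm1 hC0]



def lam (z v : ℂ) : ℝ :=
  (1 + dist z v) * (Real.exp (-(‖z‖^2 + ‖v‖^2)/4) + Real.exp (-(dist z v)^2/2))

lemma lam_nonneg (z v : ℂ) : 0 ≤ lam z v := by
  unfold lam; positivity

lemma lam_symm (z v : ℂ) : lam z v = lam v z := by
  unfold lam; rw [dist_comm]; ring_nf

lemma lam_continuous : Continuous (fun q : ℂ × ℂ => lam q.1 q.2) := by
  unfold lam; fun_prop

lemma ofReal_norm_integral_le (F : ℂ → ℂ) :
    ENNReal.ofReal ‖∫ v, F v‖ ≤ ∫⁻ v, ENNReal.ofReal ‖F v‖ := by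
  by_cases hF : Integrable F volume
  · calc ENNReal.ofReal ‖∫ v, F v‖ ≤ ENNReal.ofReal (∫ v, ‖F v‖) :=
        ENNReal.ofReal_le_ofReal (norm_integral_le_integral_norm F)
    _ = ∫⁻ v, ENNReal.ofReal ‖F v‖ :=
        ofReal_integral_eq_lintegral_ofReal hF.norm (ae_of_all _ fun v => norm_nonneg _)
  · rw [integral_undef hF]; simp

lemma gaussInt {c : ℝ} (hc : 0 < c) : Integrable (fun v : ℂ => Real.exp (-c * ‖v‖^2)) := by
  have h := (GaussianFourier.integrable_cexp_neg_mul_sq_norm_add (V := ℂ)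
    (b := (c:ℂ)) (by simpa using hc) 0 0).norm
  have : (fun v : ℂ => ‖Complex.exp (-(c:ℂ) * ‖v‖^2 + 0 * (inner ℝ (0:ℂ) v : ℝ))‖)
      = fun v : ℂ => Real.exp (-c * ‖v‖^2) := by
    funext v
    rw [Complex.norm_exp]
    simp [← Complex.ofReal_pow]
  rwa [this] at h

lemma polyGaussInt {c : ℝ} (hc : 0 < c) :
    Integrable (fun v : ℂ => (1 + ‖v‖) * Real.exp (-c * ‖v‖^2)) := by
  have key : ∀ v : ℂ, ‖(1 + ‖v‖) * Real.exp (-c * ‖v‖^2)‖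
      ≤ Real.exp (1/(2*c)) * Real.exp (-(c/2) * ‖v‖^2) := by
    intro v
    set x := ‖v‖ with hx
    have hx0 : 0 ≤ x := norm_nonneg _
    rw [Real.norm_of_nonneg (by positivity), ← Real.exp_add]
    have h1 : (1:ℝ) + x ≤ Real.exp x := by
      have := Real.add_one_le_exp x; linarith
    have h3 : x - (c/2)*x^2 ≤ 1/(2*c) := by
      rw [le_div_iff₀ (by positivity : (0:ℝ) < 2*c)]
      nlinarith [sq_nonneg (c*x - 1)]
    calc (1 + x) * Real.exp (-c * x^2) ≤ Real.exp x * Real.exp (-c * x^2) := by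
          apply mul_le_mul_of_nonneg_right h1 (Real.exp_pos _).le
      _ = Real.exp (x + -c * x^2) := (Real.exp_add _ _).symm
      _ ≤ Real.exp (1/(2*c) + -(c/2) * x^2) := by
          apply Real.exp_le_exp.2; nlinarith [sq_nonneg x]
  refine Integrable.mono' ((gaussInt (by positivity : (0:ℝ) < c/2)).const_mul
    (Real.exp (1/(2*c)))) ?_ (ae_of_all _ key)
  exact ((continuous_const.add continuous_norm).mul
    ((continuous_const.mul (continuous_norm.pow 2)).rexp)).aestronglyMeasurable

lemma lam_marginal : ∃ A : ℝ, 1 ≤ A ∧ ∀ z : ℂ, ∫⁻ v, ENNReal.ofReal (lam z v) ≤ ENNReal.ofReal A := by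
  have h2 : ((0:ℝ) < 1/2) := by norm_num
  have h4 : ((0:ℝ) < 1/4) := by norm_num
  set A1 := ∫ u : ℂ, (1 + ‖u‖) * Real.exp (-(1/2) * ‖u‖^2) with hA1
  set A2 := ∫ u : ℂ, (1 + ‖u‖) * Real.exp (-(1/4) * ‖u‖^2) with hA2
  have hi1 : Integrable (fun u : ℂ => (1 + ‖u‖) * Real.exp (-(1/2) * ‖u‖^2)) := polyGaussInt h2
  have hi2 : Integrable (fun u : ℂ => (1 + ‖u‖) * Real.exp (-(1/4) * ‖u‖^2)) := polyGaussInt h4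
  have hA2nn : 0 ≤ A2 := integral_nonneg (fun u => by positivity)
  have hA1nn : 0 ≤ A1 := integral_nonneg (fun u => by positivity)
  refine ⟨Real.exp 1 * A2 + A1 + 1, by nlinarith [hA1nn, hA2nn, Real.exp_pos 1], fun z => ?_⟩
  set f1 : ℂ → ℝ := fun v => Real.exp 1 * ((1 + ‖v‖) * Real.exp (-(1/4) * ‖v‖^2)) with hf1
  set f2 : ℂ → ℝ := fun v => (1 + ‖v - z‖) * Real.exp (-(1/2) * ‖v - z‖^2) with hf2
  have hpt : ∀ v : ℂ, lam z v ≤ f1 v + f2 v := by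
    intro v
    have hd : dist z v = ‖v - z‖ := by rw [dist_comm, dist_eq_norm]
    have e2eq : (1 + dist z v) * Real.exp (-(dist z v)^2/2) = f2 v := by
      rw [hd, hf2]; ring_nf
    have e1le : (1 + dist z v) * Real.exp (-(‖z‖^2 + ‖v‖^2)/4) ≤ f1 v := by
      have hzv : dist z v ≤ ‖z‖ + ‖v‖ := dist_le_norm_add_norm z v
      have step1 : (1 + dist z v) ≤ (1 + ‖z‖) * (1 + ‖v‖) := by
        have h1 : 0 ≤ ‖z‖ := norm_nonneg _
        have h2 : 0 ≤ ‖v‖ := norm_nonneg _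
        nlinarith [mul_nonneg h1 h2]
      have step2 : Real.exp (-(‖z‖^2 + ‖v‖^2)/4)
          = Real.exp (-(1/4) * ‖z‖^2) * Real.exp (-(1/4) * ‖v‖^2) := by
        rw [← Real.exp_add]; ring_nf
      have step3 : (1 + ‖z‖) * Real.exp (-(1/4) * ‖z‖^2) ≤ Real.exp 1 := by
        have ha : (1:ℝ) + ‖z‖ ≤ Real.exp ‖z‖ := by linarith [Real.add_one_le_exp ‖z‖]
        calc (1 + ‖z‖) * Real.exp (-(1/4) * ‖z‖^2)
            ≤ Real.exp ‖z‖ * Real.exp (-(1/4) * ‖z‖^2) :=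
              mul_le_mul_of_nonneg_right ha (Real.exp_pos _).le
          _ = Real.exp (‖z‖ + -(1/4) * ‖z‖^2) := (Real.exp_add _ _).symm
          _ ≤ Real.exp 1 := Real.exp_le_exp.2 (by nlinarith [sq_nonneg (‖z‖ - 2)])
      calc (1 + dist z v) * Real.exp (-(‖z‖^2 + ‖v‖^2)/4)
          ≤ ((1 + ‖z‖) * (1 + ‖v‖)) * (Real.exp (-(1/4) * ‖z‖^2) * Real.exp (-(1/4) * ‖v‖^2)) := by
            rw [step2]
            exact mul_le_mul_of_nonneg_right step1 (by positivity)
        _ = ((1 + ‖z‖) * Real.exp (-(1/4) * ‖z‖^2)) * ((1 + ‖v‖) * Real.exp (-(1/4) * ‖v‖^2)) := by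
            ring
        _ ≤ Real.exp 1 * ((1 + ‖v‖) * Real.exp (-(1/4) * ‖v‖^2)) :=
            mul_le_mul_of_nonneg_right step3 (by positivity)
        _ = f1 v := rfl
    calc lam z v = (1 + dist z v) * Real.exp (-(‖z‖^2 + ‖v‖^2)/4)
          + (1 + dist z v) * Real.exp (-(dist z v)^2/2) := by unfold lam; ring
      _ ≤ f1 v + f2 v := by rw [e2eq]; exact add_le_add e1le le_rfl
  have hmeas1 : Measurable f1 := by fun_prop
  have hmeas2 : Measurable f2 := by fun_prop
  calc ∫⁻ v, ENNReal.ofReal (lam z v)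
      ≤ ∫⁻ v, (ENNReal.ofReal (f1 v) + ENNReal.ofReal (f2 v)) := by
        refine lintegral_mono (fun v => ?_)
        rw [← ENNReal.ofReal_add (by positivity) (by positivity)]
        exact ENNReal.ofReal_le_ofReal (hpt v)
    _ = (∫⁻ v, ENNReal.ofReal (f1 v)) + ∫⁻ v, ENNReal.ofReal (f2 v) :=
        lintegral_add_left hmeas1.ennreal_ofReal _
    _ ≤ ENNReal.ofReal (Real.exp 1 * A2) + ENNReal.ofReal A1 := by
        have q1 : ∫⁻ v, ENNReal.ofReal (f1 v) = ENNReal.ofReal (Real.exp 1 * A2) := by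
          rw [← ofReal_integral_eq_lintegral_ofReal (hi2.const_mul _)
            (ae_of_all _ fun v => by positivity)]
          congr 1
          rw [MeasureTheory.integral_const_mul]
        have q2 : ∫⁻ v, ENNReal.ofReal (f2 v) = ENNReal.ofReal A1 := by
          have hmp : MeasurePreserving (fun v : ℂ => v - z) volume volume :=
            measurePreserving_sub_right volume z
          have hcomp := hmp.lintegral_comp
            (f := fun u : ℂ => ENNReal.ofReal ((1 + ‖u‖) * Real.exp (-(1/2) * ‖u‖^2)))
            (by fun_prop)
          have : ∫⁻ v, ENNReal.ofReal (f2 v)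
              = ∫⁻ u, ENNReal.ofReal ((1 + ‖u‖) * Real.exp (-(1/2) * ‖u‖^2)) := hcomp
          rw [this, ← ofReal_integral_eq_lintegral_ofReal hi1
            (ae_of_all _ fun v => by positivity)]
        rw [q1, q2]
    _ ≤ ENNReal.ofReal (Real.exp 1 * A2 + A1 + 1) := by
        rw [← ENNReal.ofReal_add (by positivity) hA1nn]
        exact ENNReal.ofReal_le_ofReal (by linarith)

lemma schur_swap {W : ℂ → ℝ≥0∞} (hW : Measurable W) {A : ℝ}
    (hrow : ∀ z : ℂ, ∫⁻ v, ENNReal.ofReal (lam z v) ≤ ENNReal.ofReal A) :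
    ∫⁻ z, ∫⁻ v, ENNReal.ofReal (lam z v) * W v
      ≤ ENNReal.ofReal A * ∫⁻ v, W v := by
  have hcol : ∀ v : ℂ, ∫⁻ z, ENNReal.ofReal (lam z v) ≤ ENNReal.ofReal A := by
    intro v
    have : (fun z : ℂ => ENNReal.ofReal (lam z v)) = fun z => ENNReal.ofReal (lam v z) := by
      funext z; rw [lam_symm]
    rw [this]
    exact hrow v
  have hlm : Measurable (fun q : ℂ × ℂ => ENNReal.ofReal (lam q.1 q.2)) :=
    lam_continuous.measurable.ennreal_ofReal
  have hswap : ∫⁻ z, ∫⁻ v, ENNReal.ofReal (lam z v) * W v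
      = ∫⁻ v, ∫⁻ z, ENNReal.ofReal (lam z v) * W v := by
    exact lintegral_lintegral_swap ((hlm.mul (hW.comp measurable_snd)).aemeasurable)
  rw [hswap]
  calc ∫⁻ v, ∫⁻ z, ENNReal.ofReal (lam z v) * W v
      = ∫⁻ v, (∫⁻ z, ENNReal.ofReal (lam z v)) * W v := by
        refine lintegral_congr (fun v => ?_)
        exact lintegral_mul_const (W v) (lam_continuous.measurable.comp
          (continuous_id.prodMk continuous_const).measurable).ennreal_ofReal
    _ ≤ ∫⁻ v, ENNReal.ofReal A * W v :=
        lintegral_mono (fun v => mul_le_mul_left (hcol v) _)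
    _ = ENNReal.ofReal A * ∫⁻ v, W v := lintegral_const_mul' _ _ ENNReal.ofReal_ne_top

lemma schur {p A : ℝ} (hp : 1 ≤ p) (hA : 1 ≤ A)
    (hrow : ∀ z : ℂ, ∫⁻ v, ENNReal.ofReal (lam z v) ≤ ENNReal.ofReal A)
    {u : ℂ → ℝ} (hu : Measurable u) :
    ∫⁻ z, (∫⁻ v, ENNReal.ofReal (lam z v) * ENNReal.ofReal (u v)) ^ p
      ≤ ENNReal.ofReal A ^ p * ∫⁻ v, (ENNReal.ofReal (u v)) ^ p := by
  set U : ℂ → ℝ≥0∞ := fun v => ENNReal.ofReal (u v) with hU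
  have hUm : Measurable U := hu.ennreal_ofReal
  rcases eq_or_lt_of_le hp with hp1 | hp1
  · subst hp1
    simp only [ENNReal.rpow_one]
    exact schur_swap hUm hrow
  · have hp0 : (0:ℝ) < p := lt_trans one_pos hp1
    set q : ℝ := p / (p - 1) with hqdef
    have hpq : p.HolderConjugate q := Real.HolderConjugate.conjExponent hp1
    have hq0 : (0:ℝ) < q := hpq.symm.pos
    have hΛ : ∀ z : ℂ, Measurable (fun v => ENNReal.ofReal (lam z v)) := fun z =>
      (lam_continuous.measurable.comp (continuous_const.prodMk continuous_id).measurable).ennreal_ofReal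
    have key : ∀ z : ℂ, (∫⁻ v, ENNReal.ofReal (lam z v) * U v) ^ p
        ≤ ENNReal.ofReal A ^ ((1/q) * p) * ∫⁻ v, ENNReal.ofReal (lam z v) * (U v) ^ p := by
      intro z
      have hsplit : ∀ v : ℂ, ENNReal.ofReal (lam z v) * U v
          = ((ENNReal.ofReal (lam z v)) ^ (1/q)) * ((ENNReal.ofReal (lam z v)) ^ (1/p) * U v) := by
        intro v
        have hiq : 1/p + 1/q = 1 := by
          rw [one_div, one_div]; exact hpq.inv_add_inv_eq_one
        have hadd : (ENNReal.ofReal (lam z v)) ^ (1/q) * (ENNReal.ofReal (lam z v)) ^ (1/p)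
            = (ENNReal.ofReal (lam z v)) ^ (1/q + 1/p) :=
          (ENNReal.rpow_add_of_nonneg _ _ (one_div_nonneg.2 hq0.le) (one_div_nonneg.2 hp0.le)).symm
        rw [← mul_assoc, hadd, show 1/q + 1/p = 1 by linarith, ENNReal.rpow_one]
      have hold : (∫⁻ v, ENNReal.ofReal (lam z v) * U v)
          ≤ (∫⁻ v, ENNReal.ofReal (lam z v)) ^ (1/q)
            * (∫⁻ v, ENNReal.ofReal (lam z v) * (U v) ^ p) ^ (1/p) := by
        have h := ENNReal.lintegral_mul_le_Lp_mul_Lq volume hpq.symm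
          (((hΛ z).pow_const (1/q)).aemeasurable)
          ((((hΛ z).pow_const (1/p)).mul hUm).aemeasurable)
        simp only [Pi.mul_apply] at h
        calc (∫⁻ v, ENNReal.ofReal (lam z v) * U v)
            = ∫⁻ v, ((ENNReal.ofReal (lam z v)) ^ (1/q)) * ((ENNReal.ofReal (lam z v)) ^ (1/p) * U v) := by
              exact lintegral_congr hsplit
          _ ≤ (∫⁻ v, ((ENNReal.ofReal (lam z v)) ^ (1/q)) ^ q) ^ (1/q)
              * (∫⁻ v, ((ENNReal.ofReal (lam z v)) ^ (1/p) * U v) ^ p) ^ (1/p) := h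
          _ = (∫⁻ v, ENNReal.ofReal (lam z v)) ^ (1/q)
              * (∫⁻ v, ENNReal.ofReal (lam z v) * (U v) ^ p) ^ (1/p) := by
              congr 1
              · congr 1
                refine lintegral_congr (fun v => ?_)
                rw [← ENNReal.rpow_mul, one_div_mul_cancel hq0.ne', ENNReal.rpow_one]
              · congr 1
                refine lintegral_congr (fun v => ?_)
                rw [ENNReal.mul_rpow_of_nonneg _ _ hp0.le, ← ENNReal.rpow_mul,
                  one_div_mul_cancel hp0.ne', ENNReal.rpow_one]
      calc (∫⁻ v, ENNReal.ofReal (lam z v) * U v) ^ p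
          ≤ ((∫⁻ v, ENNReal.ofReal (lam z v)) ^ (1/q)
            * (∫⁻ v, ENNReal.ofReal (lam z v) * (U v) ^ p) ^ (1/p)) ^ p :=
            ENNReal.rpow_le_rpow hold hp0.le
        _ = ((∫⁻ v, ENNReal.ofReal (lam z v)) ^ (1/q)) ^ p
            * ((∫⁻ v, ENNReal.ofReal (lam z v) * (U v) ^ p) ^ (1/p)) ^ p := by
            rw [ENNReal.mul_rpow_of_nonneg _ _ hp0.le]
        _ = ((∫⁻ v, ENNReal.ofReal (lam z v)) ^ ((1/q) * p))
            * (∫⁻ v, ENNReal.ofReal (lam z v) * (U v) ^ p) := by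
            rw [← ENNReal.rpow_mul, ← ENNReal.rpow_mul, one_div_mul_cancel hp0.ne',
              ENNReal.rpow_one]
        _ ≤ ENNReal.ofReal A ^ ((1/q) * p)
            * (∫⁻ v, ENNReal.ofReal (lam z v) * (U v) ^ p) := by
            apply mul_le_mul_left
            exact ENNReal.rpow_le_rpow (hrow z) (by positivity)
    have hconst_ne_top : ENNReal.ofReal A ^ ((1/q) * p) ≠ ⊤ :=
      ENNReal.rpow_ne_top_of_nonneg (by positivity) ENNReal.ofReal_ne_top
    calc ∫⁻ z, (∫⁻ v, ENNReal.ofReal (lam z v) * U v) ^ p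
        ≤ ∫⁻ z, ENNReal.ofReal A ^ ((1/q) * p) * ∫⁻ v, ENNReal.ofReal (lam z v) * (U v) ^ p :=
          lintegral_mono key
      _ = ENNReal.ofReal A ^ ((1/q) * p)
          * ∫⁻ z, ∫⁻ v, ENNReal.ofReal (lam z v) * (U v) ^ p :=
          lintegral_const_mul' _ _ hconst_ne_top
      _ ≤ ENNReal.ofReal A ^ ((1/q) * p) * (ENNReal.ofReal A * ∫⁻ v, (U v) ^ p) := by
          apply mul_le_mul_right
          exact schur_swap (hUm.pow_const p) hrow
      _ = ENNReal.ofReal A ^ ((1/q) * p + 1) * ∫⁻ v, (U v) ^ p := by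
          rw [ENNReal.rpow_add _ _ (ENNReal.ofReal_pos.2 (by linarith)).ne'
            ENNReal.ofReal_ne_top, ENNReal.rpow_one, mul_assoc]
      _ = ENNReal.ofReal A ^ p * ∫⁻ v, (U v) ^ p := by
          congr 1
          have : (1/q) * p + 1 = p := by
            have h1 : 1/p + 1/q = 1 := by
              rw [one_div, one_div]; exact hpq.inv_add_inv_eq_one
            have hq0' : q ≠ 0 := hq0.ne'
            field_simp at h1 ⊢
            nlinarith [h1]
          rw [this]

/-- if `g ∈ BO_r`, then the Hankel operator `H_g` is bounded on `F^{p,m}`. -/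
theorem stmt8 (m : ℕ) (p r : ℝ) (hp : 1 ≤ p) (hr : 0 < r) (g : ℂ → ℂ)
    (hBO : MemBO r g) :
    ∃ C > (0 : ℝ), ∀ f : ℂ → ℂ, Differentiable ℂ f → fockNormP m p f < ⊤ →
      fockNormP m p (hankel m g f) ≤ ENNReal.ofReal (C ^ p) * fockNormP m p f := by
  obtain ⟨hgcont, C0, hC0⟩ := hBO
  have hgrow := bo_growth hr hC0
  set c4 : ℝ := C0 * max 1 r⁻¹ with hc4
  have hc4nn : 0 ≤ c4 := by
    have hC0nn : 0 ≤ C0 := le_trans (by simp) (hC0 0 0 (by simp [hr.le]))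
    positivity
  set c2 : ℝ := (m.factorial : ℝ) * 2 ^ m with hc2
  have hc2nn : 0 ≤ c2 := by positivity
  obtain ⟨A, hA1, hrow⟩ := lam_marginal
  have hAnn : 0 ≤ A := le_trans zero_le_one hA1
  set c5 : ℝ := Real.pi⁻¹ * (c4 * c2) with hc5
  have hc5nn : 0 ≤ c5 := by positivity
  set C : ℝ := max 1 (c5 * A) with hCdef
  have hCpos : (0:ℝ) < C := lt_of_lt_of_le one_pos (le_max_left _ _)
  refine ⟨C, hCpos, ?_⟩
  intro f hf _hfin
  have hp0 : (0:ℝ) < p := lt_of_lt_of_le one_pos hp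
  -- the weight functions
  set u : ℂ → ℝ := fun v => ‖f v‖ * (‖v‖ ^ m * Real.exp (-(‖v‖ ^ 2)/2))
    with hudef
  have hunn : ∀ v, 0 ≤ u v := fun v => by
    simp only [hudef]; positivity
  have hum : Measurable u := by
    have hfc : Continuous f := hf.continuous
    exact ((hfc.norm).mul ((continuous_norm.pow m).mul
      (((continuous_norm.pow 2).neg.div_const 2).rexp))).measurable
  -- rewriting the fockNormP integrand
  have hrw : ∀ (h : ℂ → ℂ) (z : ℂ),
      ENNReal.ofReal (‖h z‖ ^ p * ‖z‖ ^ ((m:ℝ) * p)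
        * Real.exp (-(p/2) * ‖z‖ ^ 2))
      = ENNReal.ofReal (‖h z‖ * (‖z‖ ^ m * Real.exp (-(‖z‖ ^ 2)/2))) ^ p := by
    intro h z
    rw [ENNReal.ofReal_rpow_of_nonneg (by positivity) hp0.le]
    congr 1
    rw [Real.mul_rpow (norm_nonneg _) (by positivity),
      Real.mul_rpow (pow_nonneg (norm_nonneg z) m) (Real.exp_pos _).le]
    have e1 : ((‖z‖ ^ m : ℝ)) ^ p = ‖z‖ ^ ((m:ℝ) * p) := by
      rw [← Real.rpow_natCast (‖z‖) m, ← Real.rpow_mul (norm_nonneg z)]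
    have e2 : (Real.exp (-(‖z‖ ^ 2)/2)) ^ p = Real.exp (-(p/2) * ‖z‖ ^ 2) := by
      rw [← Real.exp_mul]; congr 1; ring
    rw [e1, e2]; ring
  -- pointwise estimate
  have hpoint : ∀ z : ℂ,
      ENNReal.ofReal (‖hankel m g f z‖ * (‖z‖ ^ m * Real.exp (-(‖z‖ ^ 2)/2)))
      ≤ ENNReal.ofReal c5 * ∫⁻ v, ENNReal.ofReal (lam z v) * ENNReal.ofReal (u v) := by
    intro z
    set wz : ℝ := ‖z‖ ^ m * Real.exp (-(‖z‖ ^ 2)/2) with hwz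
    have hwznn : 0 ≤ wz := by positivity
    set F : ℂ → ℂ := fun v => (‖v‖ ^ (2 * m) * Real.exp (-(‖v‖ ^ 2))) •
      ((g z - g v) * f v * (starRingEnd ℂ) (Kker m z v)) with hFdef
    have h1 : ‖hankel m g f z‖ = Real.pi⁻¹ * ‖∫ v, F v‖ := by
      rw [hankel, norm_smul, Real.norm_of_nonneg (by positivity)]
    have hreal : ∀ v : ℂ, wz * ‖F v‖ ≤ (c4 * c2) * (lam z v * u v) := by
      intro v
      have hF : ‖F v‖ = (‖v‖ ^ (2 * m) * Real.exp (-(‖v‖ ^ 2)))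
          * (‖g z - g v‖ * (‖f v‖ * ‖Kker m z v‖)) := by
        rw [hFdef]
        simp only [norm_smul, norm_mul, Real.norm_of_nonneg
          (by positivity : (0:ℝ) ≤ ‖v‖ ^ (2 * m) * Real.exp (-(‖v‖ ^ 2))),
          RCLike.norm_conj]
        ring
      have hpow : ‖v‖ ^ (2 * m) = ‖v‖ ^ m * ‖v‖ ^ m := by
        rw [two_mul, pow_add]
      have eexp : Real.exp (-(‖z‖ ^ 2)/2) * Real.exp (-(‖v‖ ^ 2))
          = Real.exp (-(‖z‖ ^ 2 + ‖v‖ ^ 2)/2)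
            * Real.exp (-(‖v‖ ^ 2)/2) := by
        rw [← Real.exp_add, ← Real.exp_add]; ring_nf
      have hid : wz * ‖F v‖
          = (‖z‖ ^ m * ‖v‖ ^ m
              * Real.exp (-(‖z‖ ^ 2 + ‖v‖ ^ 2)/2)
              * ‖Kker m z v‖)
            * (‖g z - g v‖ * (‖f v‖ * (‖v‖ ^ m * Real.exp (-(‖v‖ ^ 2)/2)))) := by
        calc wz * ‖F v‖
            = (Real.exp (-(‖z‖ ^ 2)/2) * Real.exp (-(‖v‖ ^ 2)))
              * (‖z‖ ^ m * (‖v‖ ^ m * ‖v‖ ^ m)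
                * ‖g z - g v‖ * ‖f v‖ * ‖Kker m z v‖) := by
              rw [hF, hpow, hwz]; ring
          _ = (Real.exp (-(‖z‖ ^ 2 + ‖v‖ ^ 2)/2)
                * Real.exp (-(‖v‖ ^ 2)/2))
              * (‖z‖ ^ m * (‖v‖ ^ m * ‖v‖ ^ m)
                * ‖g z - g v‖ * ‖f v‖ * ‖Kker m z v‖) := by rw [eexp]
          _ = _ := by ring
      have hK := kker_bound m z v
      have hgzv : ‖g z - g v‖ ≤ c4 * (1 + dist z v) := hgrow z v
      have hlam : lam z v = (1 + dist z v)
          * (Real.exp (-(‖z‖ ^ 2 + ‖v‖ ^ 2)/4)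
            + Real.exp (-(‖z - v‖) ^ 2/2)) := by
        rw [lam, Complex.dist_eq]
      rw [hid, hudef]
      have hKnn : 0 ≤ ‖z‖ ^ m * ‖v‖ ^ m
          * Real.exp (-(‖z‖ ^ 2 + ‖v‖ ^ 2)/2)
          * ‖Kker m z v‖ := by positivity
      have hEnn : 0 ≤ Real.exp (-(‖z‖ ^ 2 + ‖v‖ ^ 2)/4)
          + Real.exp (-(‖z - v‖) ^ 2/2) := by positivity
      have hdnn : (0:ℝ) ≤ 1 + dist z v := by positivity
      have hfvnn : 0 ≤ ‖f v‖ * (‖v‖ ^ m * Real.exp (-(‖v‖ ^ 2)/2)) := by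
        positivity
      calc (‖z‖ ^ m * ‖v‖ ^ m
              * Real.exp (-(‖z‖ ^ 2 + ‖v‖ ^ 2)/2)
              * ‖Kker m z v‖)
            * (‖g z - g v‖ * (‖f v‖ * (‖v‖ ^ m * Real.exp (-(‖v‖ ^ 2)/2))))
          ≤ (c2 * (Real.exp (-(‖z‖ ^ 2 + ‖v‖ ^ 2)/4)
              + Real.exp (-(‖z - v‖) ^ 2/2)))
            * ((c4 * (1 + dist z v))
              * (‖f v‖ * (‖v‖ ^ m * Real.exp (-(‖v‖ ^ 2)/2)))) := by
            apply mul_le_mul hK _ (by positivity) (by positivity)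
            exact mul_le_mul_of_nonneg_right hgzv hfvnn
        _ = (c4 * c2) * (lam z v
            * (‖f v‖ * (‖v‖ ^ m * Real.exp (-(‖v‖ ^ 2)/2)))) := by
            rw [hlam]; ring
    calc ENNReal.ofReal (‖hankel m g f z‖ * wz)
        = ENNReal.ofReal ((Real.pi⁻¹ * wz) * ‖∫ v, F v‖) := by
          rw [h1]; congr 1; ring
      _ = ENNReal.ofReal (Real.pi⁻¹ * wz) * ENNReal.ofReal ‖∫ v, F v‖ :=
          ENNReal.ofReal_mul (by positivity)
      _ ≤ ENNReal.ofReal (Real.pi⁻¹ * wz) * ∫⁻ v, ENNReal.ofReal ‖F v‖ :=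
          mul_le_mul_right (ofReal_norm_integral_le F) _
      _ = ∫⁻ v, ENNReal.ofReal (Real.pi⁻¹ * wz) * ENNReal.ofReal ‖F v‖ :=
          (lintegral_const_mul' _ _ ENNReal.ofReal_ne_top).symm
      _ ≤ ∫⁻ v, ENNReal.ofReal c5 * (ENNReal.ofReal (lam z v) * ENNReal.ofReal (u v)) := by
          refine lintegral_mono (fun v => ?_)
          rw [← ENNReal.ofReal_mul (by positivity), ← ENNReal.ofReal_mul (lam_nonneg z v),
            ← ENNReal.ofReal_mul hc5nn]
          apply ENNReal.ofReal_le_ofReal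
          calc Real.pi⁻¹ * wz * ‖F v‖ = Real.pi⁻¹ * (wz * ‖F v‖) := by ring
            _ ≤ Real.pi⁻¹ * ((c4 * c2) * (lam z v * u v)) :=
                mul_le_mul_of_nonneg_left (hreal v) (by positivity)
            _ = c5 * (lam z v * u v) := by rw [hc5]; ring
      _ = ENNReal.ofReal c5 * ∫⁻ v, ENNReal.ofReal (lam z v) * ENNReal.ofReal (u v) :=
          lintegral_const_mul' _ _ ENNReal.ofReal_ne_top
  -- Schur estimate
  have hschur := schur hp hA1 hrow hum
  -- final computation
  rw [fockNormP, fockNormP]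
  have hH : ∫⁻ z, ENNReal.ofReal (‖hankel m g f z‖ ^ p * ‖z‖ ^ ((m:ℝ) * p)
      * Real.exp (-(p/2) * ‖z‖ ^ 2))
      ≤ ENNReal.ofReal (C ^ p)
        * ∫⁻ v, ENNReal.ofReal (‖f v‖ ^ p * ‖v‖ ^ ((m:ℝ) * p)
            * Real.exp (-(p/2) * ‖v‖ ^ 2)) := by
    have step1 : ∫⁻ z, ENNReal.ofReal (‖hankel m g f z‖ ^ p * ‖z‖ ^ ((m:ℝ) * p)
        * Real.exp (-(p/2) * ‖z‖ ^ 2))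
        ≤ ENNReal.ofReal c5 ^ p * (ENNReal.ofReal A ^ p
          * ∫⁻ v, (ENNReal.ofReal (u v)) ^ p) := by
      calc ∫⁻ z, ENNReal.ofReal (‖hankel m g f z‖ ^ p * ‖z‖ ^ ((m:ℝ) * p)
            * Real.exp (-(p/2) * ‖z‖ ^ 2))
          = ∫⁻ z, ENNReal.ofReal (‖hankel m g f z‖
              * (‖z‖ ^ m * Real.exp (-(‖z‖ ^ 2)/2))) ^ p := by
            exact lintegral_congr (fun z => hrw _ z)
        _ ≤ ∫⁻ z, (ENNReal.ofReal c5
              * ∫⁻ v, ENNReal.ofReal (lam z v) * ENNReal.ofReal (u v)) ^ p := by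
            refine lintegral_mono (fun z => ?_)
            exact ENNReal.rpow_le_rpow (hpoint z) hp0.le
        _ = ∫⁻ z, ENNReal.ofReal c5 ^ p
              * (∫⁻ v, ENNReal.ofReal (lam z v) * ENNReal.ofReal (u v)) ^ p := by
            refine lintegral_congr (fun z => ?_)
            rw [ENNReal.mul_rpow_of_nonneg _ _ hp0.le]
        _ = ENNReal.ofReal c5 ^ p
            * ∫⁻ z, (∫⁻ v, ENNReal.ofReal (lam z v) * ENNReal.ofReal (u v)) ^ p :=
            lintegral_const_mul' _ _
              (ENNReal.rpow_ne_top_of_nonneg hp0.le ENNReal.ofReal_ne_top)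
        _ ≤ ENNReal.ofReal c5 ^ p * (ENNReal.ofReal A ^ p
            * ∫⁻ v, (ENNReal.ofReal (u v)) ^ p) := mul_le_mul_right hschur _
    have step2 : ENNReal.ofReal c5 ^ p * (ENNReal.ofReal A ^ p
        * ∫⁻ v, (ENNReal.ofReal (u v)) ^ p)
        ≤ ENNReal.ofReal (C ^ p) * ∫⁻ v, (ENNReal.ofReal (u v)) ^ p := by
      rw [← mul_assoc, ← ENNReal.mul_rpow_of_nonneg _ _ hp0.le,
        ← ENNReal.ofReal_mul hc5nn, ENNReal.ofReal_rpow_of_nonneg (by positivity) hp0.le]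
      apply mul_le_mul_left
      apply ENNReal.ofReal_le_ofReal
      exact Real.rpow_le_rpow (by positivity) (le_max_right 1 (c5 * A)) hp0.le
    have step3 : ∫⁻ v, (ENNReal.ofReal (u v)) ^ p
        = ∫⁻ v, ENNReal.ofReal (‖f v‖ ^ p * ‖v‖ ^ ((m:ℝ) * p)
            * Real.exp (-(p/2) * ‖v‖ ^ 2)) := by
      exact lintegral_congr (fun v => (hrw f v).symm)
    calc ∫⁻ z, ENNReal.ofReal (‖hankel m g f z‖ ^ p * ‖z‖ ^ ((m:ℝ) * p)
          * Real.exp (-(p/2) * ‖z‖ ^ 2))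
        ≤ ENNReal.ofReal c5 ^ p * (ENNReal.ofReal A ^ p
          * ∫⁻ v, (ENNReal.ofReal (u v)) ^ p) := step1
      _ ≤ ENNReal.ofReal (C ^ p) * ∫⁻ v, (ENNReal.ofReal (u v)) ^ p := step2
      _ = _ := by rw [step3]
  calc ENNReal.ofReal (omegaC m p) * ∫⁻ z, ENNReal.ofReal (‖hankel m g f z‖ ^ p
        * ‖z‖ ^ ((m:ℝ) * p) * Real.exp (-(p/2) * ‖z‖ ^ 2))
      ≤ ENNReal.ofReal (omegaC m p) * (ENNReal.ofReal (C ^ p)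
        * ∫⁻ v, ENNReal.ofReal (‖f v‖ ^ p * ‖v‖ ^ ((m:ℝ) * p)
            * Real.exp (-(p/2) * ‖v‖ ^ 2))) := mul_le_mul_right hH _
    _ = ENNReal.ofReal (C ^ p) * (ENNReal.ofReal (omegaC m p)
        * ∫⁻ v, ENNReal.ofReal (‖f v‖ ^ p * ‖v‖ ^ ((m:ℝ) * p)
            * Real.exp (-(p/2) * ‖v‖ ^ 2))) := by ring

end
end

section
/- Let t ∈ ℝ and let M > 0 be a fixed real number. Then there exists a constant C₀ > 0 such that Σ_{k=0}^∞ (y/(k+1))^t · y^k/k! ≤ C₀ e^y for all real y ≥ M. Furthermore, if t ≥ 0, then there exists C₀ > 0 such that the inequality holds for all y ≥ 0. -/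
open MeasureTheory Metric Complex Filter
open scoped ENNReal

noncomputable section

lemma expS (y : ℝ) : ∑' k : ℕ, y ^ k / (Nat.factorial k : ℝ) = Real.exp y := by
  rw [Real.exp_eq_exp_ℝ, NormedSpace.exp_eq_tsum_div]

lemma fact_add_le (n k : ℕ) :
    Nat.factorial (n + k) ≤ ((n + 1) * (k + 1)) ^ n * Nat.factorial k := by
  induction n with
  | zero => simp
  | succ n ih =>
    have h1 : n + 1 + k = (n + k) + 1 := by ring
    calc Nat.factorial (n + 1 + k) = (n + k + 1) * Nat.factorial (n + k) := by
          rw [h1, Nat.factorial_succ]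
      _ ≤ ((n + 2) * (k + 1)) * (((n + 1) * (k + 1)) ^ n * Nat.factorial k) := by
          apply Nat.mul_le_mul _ ih; nlinarith
      _ ≤ ((n + 2) * (k + 1)) * (((n + 2) * (k + 1)) ^ n * Nat.factorial k) := by
          gcongr <;> omega
      _ = ((n + 2) * (k + 1)) ^ (n + 1) * Nat.factorial k := by ring

lemma pow_le_descF (n k : ℕ) (h : n ≤ k) :
    (k + 1) ^ n ≤ (n + 1) ^ n * Nat.descFactorial k n := by
  induction n with
  | zero => simp
  | succ n ih =>
    have hk : n ≤ k := by omega
    obtain ⟨d, hd⟩ : ∃ d, k = n + (d + 1) := ⟨k - n - 1, by omega⟩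
    have h2 : k + 1 ≤ (n + 2) * (k - n) := by
      subst hd; simp only [Nat.add_sub_cancel_left]; nlinarith
    calc (k + 1) ^ (n + 1) = (k + 1) * (k + 1) ^ n := by ring
      _ ≤ ((n + 2) * (k - n)) * ((n + 1) ^ n * Nat.descFactorial k n) :=
          Nat.mul_le_mul h2 (ih hk)
      _ ≤ ((n + 2) * (k - n)) * ((n + 2) ^ n * Nat.descFactorial k n) := by gcongr <;> omega
      _ = (n + 2) ^ (n + 1) * ((k - n) * Nat.descFactorial k n) := by ring
      _ = (n + 2) ^ (n + 1) * Nat.descFactorial k (n + 1) := by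
          rw [Nat.descFactorial_succ]

lemma pow_le_descF' (n k : ℕ) :
    ((k : ℝ) + 1) ^ n ≤ ((n : ℝ) + 1) ^ n * (Nat.descFactorial k n + 1) := by
  rcases le_or_gt n k with h | h
  · have := pow_le_descF n k h
    have h2 : ((k + 1) ^ n : ℝ) ≤ ((n + 1) ^ n * Nat.descFactorial k n : ℕ) := by
      exact_mod_cast this
    push_cast at h2 ⊢
    nlinarith [pow_nonneg (by positivity : (0:ℝ) ≤ (n:ℝ)+1) n]
  · have hkn : (k : ℝ) + 1 ≤ (n : ℝ) + 1 := by exact_mod_cast Nat.succ_le_succ h.le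
    have h1 : ((k : ℝ) + 1) ^ n ≤ ((n : ℝ) + 1) ^ n := by
      apply pow_le_pow_left₀ (by positivity) hkn
    nlinarith [pow_nonneg (by positivity : (0:ℝ) ≤ (n:ℝ)+1) n,
      (by positivity : (0:ℝ) ≤ (Nat.descFactorial k n : ℝ))]

-- tail sum bound
lemma tail_le (n : ℕ) (y : ℝ) (hy : 0 ≤ y) :
    ∑' k : ℕ, y ^ (n + k) / (Nat.factorial (n + k) : ℝ) ≤ Real.exp y := by
  rw [← expS y]
  have hg : Summable (fun k : ℕ => y ^ k / (Nat.factorial k : ℝ)) :=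
    Real.summable_pow_div_factorial y
  have hf : Summable (fun k : ℕ => y ^ (n + k) / (Nat.factorial (n + k) : ℝ)) :=
    hg.comp_injective (add_right_injective n)
  exact Summable.tsum_le_tsum_of_inj (fun k => n + k) (add_right_injective n)
    (fun c _ => by positivity) (fun k => le_rfl) hf hg

lemma descF_hasSum (n : ℕ) (y : ℝ) :
    HasSum (fun k : ℕ => (Nat.descFactorial k n : ℝ) * y ^ k / (Nat.factorial k : ℝ))
      (y ^ n * Real.exp y) := by
  have hexp : HasSum (fun k : ℕ => y ^ k / (Nat.factorial k : ℝ)) (Real.exp y) := by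
    rw [← expS y]; exact (Real.summable_pow_div_factorial y).hasSum
  have hshift : HasSum (fun j : ℕ => y ^ n * (y ^ j / (Nat.factorial j : ℝ)))
      (y ^ n * Real.exp y) := hexp.mul_left _
  have hcong : (fun j : ℕ =>
      (Nat.descFactorial (n + j) n : ℝ) * y ^ (n + j) / (Nat.factorial (n + j) : ℝ)) =
      fun j : ℕ => y ^ n * (y ^ j / (Nat.factorial j : ℝ)) := by
    funext j
    have hfact : (Nat.factorial j : ℝ) * (Nat.descFactorial (n + j) n : ℝ)
        = (Nat.factorial (n + j) : ℝ) := by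
      exact_mod_cast congrArg (Nat.cast (R := ℝ))
        (by simpa using Nat.factorial_mul_descFactorial (Nat.le_add_right n j))
    have hj : (Nat.factorial j : ℝ) ≠ 0 := by positivity
    have hnj : (Nat.factorial (n + j) : ℝ) ≠ 0 := by positivity
    field_simp
    rw [pow_add]
    linear_combination y ^ n * y ^ j * hfact
  have hsupp : Function.support (fun k : ℕ =>
      (Nat.descFactorial k n : ℝ) * y ^ k / (Nat.factorial k : ℝ)) ⊆
      Set.range (fun j : ℕ => n + j) := by
    intro k hk
    rcases le_or_gt n k with h | h
    · exact ⟨k - n, by show n + (k - n) = k; omega⟩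
    · exfalso; apply hk
      show (Nat.descFactorial k n : ℝ) * y ^ k / (Nat.factorial k : ℝ) = 0
      rw [Nat.descFactorial_eq_zero_iff_lt.2 h]
      simp
  refine (Function.Injective.hasSum_iff (add_right_injective n) ?_).1 ?_
  · intro x hx
    by_contra h
    exact hx (hsupp h)
  have hc2 : ((fun k : ℕ => (Nat.descFactorial k n : ℝ) * y ^ k / (Nat.factorial k : ℝ))
      ∘ (fun j : ℕ => n + j)) = fun j : ℕ => y ^ n * (y ^ j / (Nat.factorial j : ℝ)) := by
    funext j; exact congrFun hcong j
  rw [hc2]; exact hshift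

lemma main_pos (t : ℝ) (ht : 0 ≤ t) : ∃ C₀ > (0 : ℝ), ∀ y : ℝ, 0 ≤ y →
    (∑' k : ℕ, (y / ((k : ℝ) + 1)) ^ t * y ^ k / (Nat.factorial k : ℝ)) ≤
      C₀ * Real.exp y := by
  set n := ⌈t⌉₊ with hn
  refine ⟨((n : ℝ) + 1) ^ n + 1, by positivity, ?_⟩
  intro y hy
  rcases eq_or_lt_of_le hy with hy0 | hy0
  · -- y = 0
    rw [← hy0]
    have hsum : (∑' k : ℕ, ((0:ℝ) / ((k : ℝ) + 1)) ^ t * (0:ℝ) ^ k / (Nat.factorial k : ℝ))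
        = (0:ℝ) ^ t := by
      rw [tsum_eq_single 0 (by intro k hk; rw [zero_pow hk]; simp)]
      norm_num
    rw [hsum, Real.exp_zero, mul_one]
    have h1 : (0:ℝ) ^ t ≤ 1 := Real.rpow_le_one le_rfl zero_le_one ht
    nlinarith [pow_nonneg (by positivity : (0:ℝ) ≤ (n:ℝ) + 1) n]
  · -- y > 0
    set g : ℕ → ℝ := fun k => ((n : ℝ) + 1) ^ n * (y ^ (n + k) / (Nat.factorial (n + k) : ℝ)) +
      y ^ k / (Nat.factorial k : ℝ) with hg
    have hsum1 : Summable (fun k : ℕ => y ^ (n + k) / (Nat.factorial (n + k) : ℝ)) :=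
      (Real.summable_pow_div_factorial y).comp_injective (add_right_injective n)
    have hsum2 : Summable (fun k : ℕ => y ^ k / (Nat.factorial k : ℝ)) :=
      Real.summable_pow_div_factorial y
    have hgsum : Summable g := ((hsum1.mul_left _).add hsum2)
    have hfg : ∀ k : ℕ, (y / ((k : ℝ) + 1)) ^ t * y ^ k / (Nat.factorial k : ℝ) ≤ g k := by
      intro k
      have hk1 : (0:ℝ) < (k : ℝ) + 1 := by positivity
      have hb : (0:ℝ) < y / ((k : ℝ) + 1) := by positivity
      have hbt : (y / ((k : ℝ) + 1)) ^ t ≤ (y / ((k : ℝ) + 1)) ^ (n : ℕ) + 1 := by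
        rcases le_total 1 (y / ((k : ℝ) + 1)) with h1 | h1
        · have h2 : (y / ((k : ℝ) + 1)) ^ t ≤ (y / ((k : ℝ) + 1)) ^ ((n : ℕ) : ℝ) :=
            Real.rpow_le_rpow_of_exponent_le h1 (Nat.le_ceil t)
          rw [Real.rpow_natCast] at h2
          have : (0:ℝ) ≤ (y / ((k : ℝ) + 1)) ^ (n : ℕ) := by positivity
          linarith
        · have h2 : (y / ((k : ℝ) + 1)) ^ t ≤ (y / ((k : ℝ) + 1)) ^ (0 : ℝ) :=
            Real.rpow_le_rpow_of_exponent_ge hb h1 ht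
          rw [Real.rpow_zero] at h2
          have : (0:ℝ) ≤ (y / ((k : ℝ) + 1)) ^ (n : ℕ) := by positivity
          linarith
      have hknz : (Nat.factorial k : ℝ) ≠ 0 := by positivity
      have key : (Nat.factorial (n + k) : ℝ) ≤
          ((n : ℝ) + 1) ^ n * ((k : ℝ) + 1) ^ n * (Nat.factorial k : ℝ) := by
        have := fact_add_le n k
        have h2 : ((Nat.factorial (n + k) : ℕ) : ℝ) ≤
            ((((n + 1) * (k + 1)) ^ n * Nat.factorial k : ℕ) : ℝ) := by exact_mod_cast this
        push_cast at h2
        rw [mul_pow] at h2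
        linarith
      calc (y / ((k : ℝ) + 1)) ^ t * y ^ k / (Nat.factorial k : ℝ)
          ≤ ((y / ((k : ℝ) + 1)) ^ (n : ℕ) + 1) * y ^ k / (Nat.factorial k : ℝ) := by
            gcongr
        _ = y ^ (n + k) / (((k : ℝ) + 1) ^ n * (Nat.factorial k : ℝ)) +
            y ^ k / (Nat.factorial k : ℝ) := by
            rw [div_pow]; ring
        _ ≤ ((n : ℝ) + 1) ^ n * (y ^ (n + k) / (Nat.factorial (n + k) : ℝ)) +
            y ^ k / (Nat.factorial k : ℝ) := by
            have h3 : y ^ (n + k) / (((k : ℝ) + 1) ^ n * (Nat.factorial k : ℝ)) ≤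
                ((n : ℝ) + 1) ^ n * (y ^ (n + k) / (Nat.factorial (n + k) : ℝ)) := by
              rw [mul_div_assoc']
              rw [div_le_div_iff₀ (by positivity) (by positivity)]
              have key2 : y ^ (n + k) * (Nat.factorial (n + k) : ℝ) ≤
                  y ^ (n + k) * (((n : ℝ) + 1) ^ n * ((k : ℝ) + 1) ^ n *
                    (Nat.factorial k : ℝ)) :=
                mul_le_mul_of_nonneg_left key (by positivity)
              nlinarith [key2]
            linarith
        _ = g k := rfl
    have hfsum : Summable (fun k : ℕ =>
        (y / ((k : ℝ) + 1)) ^ t * y ^ k / (Nat.factorial k : ℝ)) := by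
      apply Summable.of_nonneg_of_le _ hfg hgsum
      intro k
      have hb : (0:ℝ) < y / ((k : ℝ) + 1) := by positivity
      positivity
    calc (∑' k : ℕ, (y / ((k : ℝ) + 1)) ^ t * y ^ k / (Nat.factorial k : ℝ))
        ≤ ∑' k, g k := Summable.tsum_le_tsum hfg hfsum hgsum
      _ = ((n : ℝ) + 1) ^ n * (∑' k : ℕ, y ^ (n + k) / (Nat.factorial (n + k) : ℝ)) +
          Real.exp y := by
          rw [hg, Summable.tsum_add (hsum1.mul_left _) hsum2, tsum_mul_left, expS]
      _ ≤ ((n : ℝ) + 1) ^ n * Real.exp y + Real.exp y := by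
          gcongr
          exact tail_le n y hy
      _ = (((n : ℝ) + 1) ^ n + 1) * Real.exp y := by ring

lemma main_neg (t M : ℝ) (ht : t < 0) (hM : 0 < M) : ∃ C₀ > (0 : ℝ), ∀ y : ℝ, M ≤ y →
    (∑' k : ℕ, (y / ((k : ℝ) + 1)) ^ t * y ^ k / (Nat.factorial k : ℝ)) ≤
      C₀ * Real.exp y := by
  set n := ⌈-t⌉₊ with hn
  refine ⟨((n : ℝ) + 1) ^ n + ((n : ℝ) + 1) ^ n / M ^ n + 1, by positivity, ?_⟩
  intro y hy
  have hy0 : 0 < y := lt_of_lt_of_le hM hy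
  set c : ℝ := ((n : ℝ) + 1) ^ n / y ^ n with hc
  have hc0 : 0 ≤ c := by positivity
  set g : ℕ → ℝ := fun k =>
    c * ((Nat.descFactorial k n : ℝ) * y ^ k / (Nat.factorial k : ℝ)) +
      (c * (y ^ k / (Nat.factorial k : ℝ)) + y ^ k / (Nat.factorial k : ℝ)) with hg
  have hsumD : Summable (fun k : ℕ =>
      (Nat.descFactorial k n : ℝ) * y ^ k / (Nat.factorial k : ℝ)) :=
    (descF_hasSum n y).summable
  have hsum2 : Summable (fun k : ℕ => y ^ k / (Nat.factorial k : ℝ)) :=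
    Real.summable_pow_div_factorial y
  have hgsum : Summable g := (hsumD.mul_left c).add ((hsum2.mul_left c).add hsum2)
  have hfg : ∀ k : ℕ, (y / ((k : ℝ) + 1)) ^ t * y ^ k / (Nat.factorial k : ℝ) ≤ g k := by
    intro k
    have hk1 : (0:ℝ) < (k : ℝ) + 1 := by positivity
    have hb : (0:ℝ) < y / ((k : ℝ) + 1) := by positivity
    have hbt : (y / ((k : ℝ) + 1)) ^ t ≤ (((k : ℝ) + 1) / y) ^ (n : ℕ) + 1 := by
      have hpos : (0:ℝ) ≤ (((k : ℝ) + 1) / y) ^ (n : ℕ) := by positivity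
      rcases le_total 1 (y / ((k : ℝ) + 1)) with h1 | h1
      · have h2 : (y / ((k : ℝ) + 1)) ^ t ≤ (y / ((k : ℝ) + 1)) ^ (0 : ℝ) :=
          Real.rpow_le_rpow_of_exponent_le h1 ht.le
        rw [Real.rpow_zero] at h2
        linarith
      · have hle : -((n : ℕ) : ℝ) ≤ t := by
          have := Nat.le_ceil (-t)
          rw [← hn] at this
          linarith
        have h2 : (y / ((k : ℝ) + 1)) ^ t ≤ (y / ((k : ℝ) + 1)) ^ (-((n : ℕ) : ℝ)) :=
          Real.rpow_le_rpow_of_exponent_ge hb h1 hle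
        have h3 : (y / ((k : ℝ) + 1)) ^ (-((n : ℕ) : ℝ)) = (((k : ℝ) + 1) / y) ^ (n : ℕ) := by
          rw [Real.rpow_neg hb.le, Real.rpow_natCast, ← inv_pow, inv_div]
        rw [h3] at h2
        linarith
    have hknz : (Nat.factorial k : ℝ) ≠ 0 := by positivity
    calc (y / ((k : ℝ) + 1)) ^ t * y ^ k / (Nat.factorial k : ℝ)
        ≤ ((((k : ℝ) + 1) / y) ^ (n : ℕ) + 1) * y ^ k / (Nat.factorial k : ℝ) := by
          gcongr
      _ = (((k : ℝ) + 1) ^ n / y ^ n) * y ^ k / (Nat.factorial k : ℝ) +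
          y ^ k / (Nat.factorial k : ℝ) := by
          rw [div_pow]; ring
      _ ≤ (((n : ℝ) + 1) ^ n * ((Nat.descFactorial k n : ℝ) + 1) / y ^ n) * y ^ k /
            (Nat.factorial k : ℝ) + y ^ k / (Nat.factorial k : ℝ) := by
          gcongr
          exact pow_le_descF' n k
      _ = g k := by
          rw [hg, hc]
          push_cast
          field_simp
          ring
  have hfsum : Summable (fun k : ℕ =>
      (y / ((k : ℝ) + 1)) ^ t * y ^ k / (Nat.factorial k : ℝ)) := by
    apply Summable.of_nonneg_of_le _ hfg hgsum
    intro k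
    have hb : (0:ℝ) < y / ((k : ℝ) + 1) := by positivity
    positivity
  have hyn : (y : ℝ) ^ n ≠ 0 := by positivity
  have hcy : c * (y ^ n * Real.exp y) = ((n : ℝ) + 1) ^ n * Real.exp y := by
    rw [hc]; field_simp
  have hcM : c ≤ ((n : ℝ) + 1) ^ n / M ^ n := by
    rw [hc]; gcongr
  calc (∑' k : ℕ, (y / ((k : ℝ) + 1)) ^ t * y ^ k / (Nat.factorial k : ℝ))
      ≤ ∑' k, g k := Summable.tsum_le_tsum hfg hfsum hgsum
    _ = c * (y ^ n * Real.exp y) + (c * Real.exp y + Real.exp y) := by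
        rw [hg, Summable.tsum_add (hsumD.mul_left c) ((hsum2.mul_left c).add hsum2),
          Summable.tsum_add (hsum2.mul_left c) hsum2, tsum_mul_left, tsum_mul_left,
          (descF_hasSum n y).tsum_eq, expS]
    _ ≤ ((n : ℝ) + 1) ^ n * Real.exp y +
        (((n : ℝ) + 1) ^ n / M ^ n * Real.exp y + Real.exp y) := by
        rw [hcy]
        gcongr
    _ = (((n : ℝ) + 1) ^ n + ((n : ℝ) + 1) ^ n / M ^ n + 1) * Real.exp y := by ring

/-- `Σ_k (y/(k+1))^t y^k/k! ≤ C₀ e^y` for `y ≥ M`, and for all `y ≥ 0`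
when `t ≥ 0`. -/
theorem stmt15 (t M : ℝ) (hM : 0 < M) :
    (∃ C₀ > (0 : ℝ), ∀ y : ℝ, M ≤ y →
      (∑' k : ℕ, (y / ((k : ℝ) + 1)) ^ t * y ^ k / (Nat.factorial k : ℝ)) ≤
        C₀ * Real.exp y) ∧
    (0 ≤ t → ∃ C₀ > (0 : ℝ), ∀ y : ℝ, 0 ≤ y →
      (∑' k : ℕ, (y / ((k : ℝ) + 1)) ^ t * y ^ k / (Nat.factorial k : ℝ)) ≤
        C₀ * Real.exp y) := by
  constructor
  · rcases le_or_gt 0 t with ht | ht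
    · obtain ⟨C₀, hC, h⟩ := main_pos t ht
      exact ⟨C₀, hC, fun y hy => h y (le_trans hM.le hy)⟩
    · exact main_neg t M ht hM
  · intro ht
    exact main_pos t ht
end
end

section
/- Let t ∈ ℝ and let M > 0 be a fixed real number. Then there exists a constant C₀ > 0 such that Σ_{k=0}^∞ (y/(k+1))^t · y^k/k! ≥ C₀ e^y for all real y ≥ M. Furthermore, if t ≤ 0, then there exists C₀ > 0 such that the inequality holds for all y > 0. -/
open MeasureTheory Metric Complex Filter
open scoped ENNReal

noncomputable section

open scoped Nat

private lemma aux_summable (c y : ℝ) (hy : 0 < y) :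
    Summable (fun k : ℕ => ((k : ℝ) + 1) ^ c * y ^ k / (k ! : ℝ)) := by
  apply summable_of_ratio_norm_eventually_le (r := 1/2) (by norm_num)
  filter_upwards [Filter.eventually_ge_atTop (⌈(2:ℝ) ^ |c| * 2 * y⌉₊)] with k hk
  set D : ℝ := (2:ℝ) ^ |c| with hD
  have hDpos : 0 < D := Real.rpow_pos_of_pos (by norm_num) _
  have hD1 : 1 ≤ D := Real.one_le_rpow (by norm_num) (abs_nonneg c)
  have hkp : (0:ℝ) < (k : ℝ) + 1 := by positivity
  have hk' : D * 2 * y ≤ (k : ℝ) + 1 := by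
    calc D * 2 * y ≤ (⌈D * 2 * y⌉₊ : ℝ) := Nat.le_ceil _
    _ ≤ (k : ℝ) := by exact_mod_cast hk
    _ ≤ (k : ℝ) + 1 := by linarith
  have h1 : ((k : ℝ) + 1 + 1) ^ c ≤ D * ((k : ℝ) + 1) ^ c := by
    rcases le_or_gt 0 c with hc | hc
    · have h := Real.rpow_le_rpow (show (0:ℝ) ≤ (k:ℝ)+1+1 by positivity)
        (show (k:ℝ)+1+1 ≤ 2 * ((k:ℝ)+1) by linarith) hc
      rw [Real.mul_rpow (by norm_num) hkp.le] at h
      refine h.trans ?_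
      gcongr
      exact Real.rpow_le_rpow_of_exponent_le (by norm_num) (le_abs_self c)
    · have h : ((k : ℝ) + 1 + 1) ^ c ≤ ((k : ℝ) + 1) ^ c :=
        Real.rpow_le_rpow_of_nonpos hkp (by linarith) hc.le
      refine h.trans ?_
      nlinarith [Real.rpow_pos_of_pos hkp c]
  have h2 : y / ((k:ℝ)+1) ≤ 1 / (D * 2) := by
    rw [div_le_div_iff₀ hkp (by positivity)]
    nlinarith
  have hmain : ((k : ℝ) + 1 + 1) ^ c * (y / ((k:ℝ)+1)) ≤ 1/2 * ((k : ℝ) + 1) ^ c := by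
    have := mul_le_mul h1 h2 (by positivity) (by positivity)
    refine this.trans_eq ?_
    field_simp
  have hfk : (0:ℝ) < ((k : ℝ) + 1) ^ c * y ^ k / (k ! : ℝ) := by
    have := Real.rpow_pos_of_pos hkp c
    positivity
  have hfk1 : (0:ℝ) < ((k : ℝ) + 1 + 1) ^ c * y ^ (k+1) / ((k+1)! : ℝ) := by
    have := Real.rpow_pos_of_pos (show (0:ℝ) < (k:ℝ)+1+1 by positivity) c
    positivity
  have hcast : (((k+1 : ℕ) : ℝ) + 1) = ((k : ℝ) + 1 + 1) := by push_cast; ring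
  rw [Real.norm_eq_abs, Real.norm_eq_abs, hcast, abs_of_pos hfk1, abs_of_pos hfk]
  have hfact : ((k+1)! : ℝ) = ((k:ℝ)+1) * (k ! : ℝ) := by
    rw [Nat.factorial_succ]; push_cast; ring
  have hrw : ((k : ℝ) + 1 + 1) ^ c * y ^ (k+1) / ((k+1)! : ℝ)
      = (((k : ℝ) + 1 + 1) ^ c * (y / ((k:ℝ)+1))) * (y ^ k / (k ! : ℝ)) := by
    rw [hfact, pow_succ]
    field_simp
  rw [hrw]
  calc (((k : ℝ) + 1 + 1) ^ c * (y / ((k:ℝ)+1))) * (y ^ k / (k ! : ℝ))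
      ≤ (1/2 * ((k : ℝ) + 1) ^ c) * (y ^ k / (k ! : ℝ)) := by
        apply mul_le_mul_of_nonneg_right hmain (by positivity)
    _ = 1/2 * (((k : ℝ) + 1) ^ c * y ^ k / (k ! : ℝ)) := by ring

private lemma sum_exp (y : ℝ) : ∑' k : ℕ, y ^ k / (k ! : ℝ) = Real.exp y := by
  rw [Real.exp_eq_exp_ℝ, NormedSpace.exp_eq_tsum_div]

private lemma summable_S1 (y : ℝ) (hy : 0 < y) :
    Summable (fun k : ℕ => (k : ℝ) * y ^ k / (k ! : ℝ)) := by
  have h := aux_summable 1 y hy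
  simp only [Real.rpow_one] at h
  refine h.of_nonneg_of_le (fun k => by positivity) (fun k => ?_)
  gcongr
  linarith

private lemma summable_S2 (y : ℝ) (hy : 0 < y) :
    Summable (fun k : ℕ => (k : ℝ) ^ 2 * y ^ k / (k ! : ℝ)) := by
  have h := aux_summable 2 y hy
  have h2 : ∀ x : ℝ, 0 ≤ x → x ^ (2:ℝ) = x ^ (2:ℕ) := by
    intro x hx
    rw [← Real.rpow_natCast x 2]
    norm_num
  refine h.of_nonneg_of_le (fun k => by positivity) (fun k => ?_)
  rw [h2 _ (by positivity)]
  gcongr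
  linarith

private lemma S1 (y : ℝ) (hy : 0 < y) :
    ∑' k : ℕ, (k : ℝ) * y ^ k / (k ! : ℝ) = y * Real.exp y := by
  rw [Summable.tsum_eq_zero_add (summable_S1 y hy)]
  have hterm : ∀ b : ℕ, ((b + 1 : ℕ) : ℝ) * y ^ (b+1) / ((b+1)! : ℝ)
      = y * (y ^ b / (b ! : ℝ)) := by
    intro b
    rw [Nat.factorial_succ, pow_succ]
    have hb : ((b:ℝ) + 1) ≠ 0 := by positivity
    have hf : ((b ! : ℕ) : ℝ) ≠ 0 := by positivity
    push_cast
    field_simp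
  simp only [hterm]
  rw [tsum_mul_left, sum_exp]
  norm_num

private lemma S2 (y : ℝ) (hy : 0 < y) :
    ∑' k : ℕ, (k : ℝ) ^ 2 * y ^ k / (k ! : ℝ) = (y ^ 2 + y) * Real.exp y := by
  rw [Summable.tsum_eq_zero_add (summable_S2 y hy)]
  have hterm : ∀ b : ℕ, ((b + 1 : ℕ) : ℝ) ^ 2 * y ^ (b+1) / ((b+1)! : ℝ)
      = y * ((b : ℝ) * y ^ b / (b ! : ℝ)) + y * (y ^ b / (b ! : ℝ)) := by
    intro b
    rw [Nat.factorial_succ, pow_succ]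
    have hb : ((b:ℝ) + 1) ≠ 0 := by positivity
    have hf : ((b ! : ℕ) : ℝ) ≠ 0 := by positivity
    push_cast
    field_simp
    ring
  simp only [hterm]
  rw [Summable.tsum_add ((summable_S1 y hy).mul_left y) ((Real.summable_pow_div_factorial y).mul_left y),
    tsum_mul_left, tsum_mul_left, S1 y hy, sum_exp]
  norm_num
  ring

private lemma Svar (y : ℝ) (hy : 0 < y) :
    ∑' k : ℕ, ((k : ℝ) - y) ^ 2 * (y ^ k / (k ! : ℝ)) = y * Real.exp y := by
  have hfun : ∀ k : ℕ, ((k : ℝ) - y) ^ 2 * (y ^ k / (k ! : ℝ))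
      = (k : ℝ) ^ 2 * y ^ k / (k ! : ℝ) - (2*y) * ((k : ℝ) * y ^ k / (k ! : ℝ))
        + y ^ 2 * (y ^ k / (k ! : ℝ)) := by
    intro k; ring
  simp only [hfun]
  rw [Summable.tsum_add (((summable_S2 y hy).sub ((summable_S1 y hy).mul_left (2*y))))
    ((Real.summable_pow_div_factorial y).mul_left (y^2)),
    Summable.tsum_sub (summable_S2 y hy) ((summable_S1 y hy).mul_left (2*y)),
    tsum_mul_left, tsum_mul_left, S1 y hy, S2 y hy, sum_exp]
  ring

private lemma key_lb (t y B : ℝ) (hy : 0 < y) (hB : 0 ≤ B)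
    (h : ∀ k : ℕ, ((k : ℝ) - y) ^ 2 ≤ 4 * y → B ≤ ((k : ℝ) + 1) ^ (-t)) :
    3/4 * B * Real.exp y ≤ ∑' k : ℕ, ((k : ℝ) + 1) ^ (-t) * y ^ k / (k ! : ℝ) := by
  have hsum := aux_summable (-t) y hy
  have hvar : Summable (fun k : ℕ => ((k : ℝ) - y) ^ 2 * (y ^ k / (k ! : ℝ))) := by
    have hfun : ∀ k : ℕ, ((k : ℝ) - y) ^ 2 * (y ^ k / (k ! : ℝ))
        = (k : ℝ) ^ 2 * y ^ k / (k ! : ℝ) - (2*y) * ((k : ℝ) * y ^ k / (k ! : ℝ))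
          + y ^ 2 * (y ^ k / (k ! : ℝ)) := by intro k; ring
    simp only [hfun]
    exact ((summable_S2 y hy).sub ((summable_S1 y hy).mul_left (2*y))).add
      ((Real.summable_pow_div_factorial y).mul_left (y^2))
  have hg : Summable (fun k : ℕ =>
      B * (y ^ k / (k ! : ℝ)) - B/(4*y) * (((k : ℝ) - y) ^ 2 * (y ^ k / (k ! : ℝ)))) :=
    ((Real.summable_pow_div_factorial y).mul_left B).sub (hvar.mul_left (B/(4*y)))
  have hle : ∀ k : ℕ,
      B * (y ^ k / (k ! : ℝ)) - B/(4*y) * (((k : ℝ) - y) ^ 2 * (y ^ k / (k ! : ℝ)))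
        ≤ ((k : ℝ) + 1) ^ (-t) * y ^ k / (k ! : ℝ) := by
    intro k
    have hq : (0:ℝ) ≤ y ^ k / (k ! : ℝ) := by positivity
    have hrw : B * (y ^ k / (k ! : ℝ)) - B/(4*y) * (((k : ℝ) - y) ^ 2 * (y ^ k / (k ! : ℝ)))
        = (B - B/(4*y) * ((k : ℝ) - y) ^ 2) * (y ^ k / (k ! : ℝ)) := by ring
    rw [hrw]
    by_cases hk : ((k : ℝ) - y) ^ 2 ≤ 4 * y
    · have h1 : B - B/(4*y) * ((k : ℝ) - y) ^ 2 ≤ ((k : ℝ) + 1) ^ (-t) := by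
        have : 0 ≤ B/(4*y) * ((k : ℝ) - y) ^ 2 := by positivity
        linarith [h k hk]
      calc (B - B/(4*y) * ((k : ℝ) - y) ^ 2) * (y ^ k / (k ! : ℝ))
          ≤ ((k : ℝ) + 1) ^ (-t) * (y ^ k / (k ! : ℝ)) :=
            mul_le_mul_of_nonneg_right h1 hq
        _ = ((k : ℝ) + 1) ^ (-t) * y ^ k / (k ! : ℝ) := by ring
    · push_neg at hk
      have h1 : B - B/(4*y) * ((k : ℝ) - y) ^ 2 ≤ 0 := by
        have h2 : B/(4*y) * (4*y) ≤ B/(4*y) * ((k : ℝ) - y) ^ 2 := by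
          apply mul_le_mul_of_nonneg_left hk.le (by positivity)
        have h3 : B/(4*y) * (4*y) = B := by field_simp
        linarith
      have h4 : (0:ℝ) ≤ ((k : ℝ) + 1) ^ (-t) * y ^ k / (k ! : ℝ) := by
        have := Real.rpow_nonneg (show (0:ℝ) ≤ (k:ℝ)+1 by positivity) (-t)
        positivity
      nlinarith
  calc 3/4 * B * Real.exp y
      = ∑' k : ℕ, (B * (y ^ k / (k ! : ℝ))
          - B/(4*y) * (((k : ℝ) - y) ^ 2 * (y ^ k / (k ! : ℝ)))) := by
        rw [Summable.tsum_sub ((Real.summable_pow_div_factorial y).mul_left B) (hvar.mul_left (B/(4*y))),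
          tsum_mul_left, tsum_mul_left, sum_exp, Svar y hy]
        field_simp
        ring
    _ ≤ ∑' k : ℕ, ((k : ℝ) + 1) ^ (-t) * y ^ k / (k ! : ℝ) := Summable.tsum_le_tsum hle hg hsum

private lemma rw_sum (t y : ℝ) (hy : 0 < y) :
    ∑' k : ℕ, (y / ((k : ℝ) + 1)) ^ t * y ^ k / (k ! : ℝ)
      = y ^ t * ∑' k : ℕ, ((k : ℝ) + 1) ^ (-t) * y ^ k / (k ! : ℝ) := by
  rw [← tsum_mul_left]
  apply tsum_congr
  intro k
  rw [Real.div_rpow hy.le (by positivity), Real.rpow_neg (by positivity)]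
  ring

private lemma part_neg (t : ℝ) (ht : t ≤ 0) :
    ∃ C₀ > (0:ℝ), ∀ y : ℝ, 0 < y →
      C₀ * Real.exp y ≤ ∑' k : ℕ, (y / ((k : ℝ) + 1)) ^ t * y ^ k / (k ! : ℝ) := by
  have h2t : (0:ℝ) < (2:ℝ) ^ t := Real.rpow_pos_of_pos (by norm_num) t
  have h16t : (0:ℝ) < (16:ℝ) ^ t := Real.rpow_pos_of_pos (by norm_num) t
  refine ⟨min (3/4 * (2:ℝ) ^ t) ((16:ℝ) ^ t), lt_min (by positivity) h16t, ?_⟩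
  intro y hy
  rw [rw_sum t y hy]
  rcases le_or_gt 16 y with h16 | h16
  · have hsq : Real.sqrt y ^ 2 = y := Real.sq_sqrt hy.le
    have h4 : (4:ℝ) ≤ Real.sqrt y := by
      rw [show (4:ℝ) = Real.sqrt 16 from by
        rw [show (16:ℝ) = 4^2 by norm_num, Real.sqrt_sq (by norm_num)]]
      exact Real.sqrt_le_sqrt h16
    have hcond : ∀ k : ℕ, ((k : ℝ) - y) ^ 2 ≤ 4 * y → (y/2) ^ (-t) ≤ ((k : ℝ) + 1) ^ (-t) := by
      intro k hk
      have hky : y / 2 ≤ (k:ℝ) + 1 := by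
        nlinarith [sq_nonneg ((k:ℝ) - y + 2*Real.sqrt y), Real.sqrt_nonneg y]
      exact Real.rpow_le_rpow (by positivity) hky (by linarith)
    have hkey := key_lb t y ((y/2) ^ (-t)) hy (Real.rpow_nonneg (by positivity) _) hcond
    have hyt : y ^ t * (y/2) ^ (-t) = 2 ^ t := by
      rw [Real.rpow_neg (by positivity), Real.div_rpow hy.le (by norm_num)]
      have h1 : y ^ t ≠ 0 := ne_of_gt (Real.rpow_pos_of_pos hy t)
      have h2 : (2:ℝ) ^ t ≠ 0 := ne_of_gt h2t
      field_simp
    have heq : y ^ t * (3/4 * (y/2) ^ (-t) * Real.exp y) = 3/4 * (2:ℝ) ^ t * Real.exp y := by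
      rw [show y ^ t * (3/4 * (y/2) ^ (-t) * Real.exp y)
        = 3/4 * (y ^ t * (y/2) ^ (-t)) * Real.exp y from by ring, hyt]
    calc min (3/4 * (2:ℝ) ^ t) ((16:ℝ) ^ t) * Real.exp y
        ≤ 3/4 * (2:ℝ) ^ t * Real.exp y :=
          mul_le_mul_of_nonneg_right (min_le_left _ _) (Real.exp_pos y).le
      _ = y ^ t * (3/4 * (y/2) ^ (-t) * Real.exp y) := heq.symm
      _ ≤ y ^ t * ∑' k : ℕ, ((k : ℝ) + 1) ^ (-t) * y ^ k / (k ! : ℝ) :=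
          mul_le_mul_of_nonneg_left hkey (Real.rpow_nonneg hy.le t)
  · have hS : Real.exp y ≤ ∑' k : ℕ, ((k : ℝ) + 1) ^ (-t) * y ^ k / (k ! : ℝ) := by
      rw [← sum_exp]
      refine Summable.tsum_le_tsum (fun k => ?_) (Real.summable_pow_div_factorial y)
        (aux_summable (-t) y hy)
      have h1 : 1 ≤ ((k:ℝ)+1) ^ (-t) :=
        Real.one_le_rpow (by have := Nat.cast_nonneg (α := ℝ) k; linarith) (by linarith)
      calc y ^ k / (k ! : ℝ) = 1 * (y ^ k / (k ! : ℝ)) := by ring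
        _ ≤ ((k:ℝ)+1) ^ (-t) * (y ^ k / (k ! : ℝ)) :=
            mul_le_mul_of_nonneg_right h1 (by positivity)
        _ = ((k:ℝ)+1) ^ (-t) * y ^ k / (k ! : ℝ) := by ring
    have hyt : (16:ℝ) ^ t ≤ y ^ t := Real.rpow_le_rpow_of_nonpos hy h16.le ht
    calc min (3/4 * (2:ℝ) ^ t) ((16:ℝ) ^ t) * Real.exp y
        ≤ (16:ℝ) ^ t * Real.exp y :=
          mul_le_mul_of_nonneg_right (min_le_right _ _) (Real.exp_pos y).le
      _ ≤ y ^ t * Real.exp y :=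
          mul_le_mul_of_nonneg_right hyt (Real.exp_pos y).le
      _ ≤ y ^ t * ∑' k : ℕ, ((k : ℝ) + 1) ^ (-t) * y ^ k / (k ! : ℝ) :=
          mul_le_mul_of_nonneg_left hS (Real.rpow_nonneg hy.le t)

private lemma part_pos (t M : ℝ) (hM : 0 < M) (ht : 0 ≤ t) :
    ∃ C₀ > (0:ℝ), ∀ y : ℝ, M ≤ y →
      C₀ * Real.exp y ≤ ∑' k : ℕ, (y / ((k : ℝ) + 1)) ^ t * y ^ k / (k ! : ℝ) := by
  set A : ℝ := 1 + 2 / Real.sqrt M + 1 / M with hA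
  have hsMp : (0:ℝ) < Real.sqrt M := Real.sqrt_pos.2 hM
  have hApos : 0 < A := by positivity
  have hAt : (0:ℝ) < A ^ (-t) := Real.rpow_pos_of_pos hApos _
  refine ⟨3/4 * A ^ (-t), by positivity, ?_⟩
  intro y hMy
  have hy : 0 < y := lt_of_lt_of_le hM hMy
  rw [rw_sum t y hy]
  have hcond : ∀ k : ℕ, ((k : ℝ) - y) ^ 2 ≤ 4 * y → (A*y) ^ (-t) ≤ ((k : ℝ) + 1) ^ (-t) := by
    intro k hk
    have hsq : Real.sqrt y ^ 2 = y := Real.sq_sqrt hy.le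
    have hsy : Real.sqrt M ≤ Real.sqrt y := Real.sqrt_le_sqrt hMy
    have h1 : (k:ℝ) ≤ y + 2*Real.sqrt y := by
      nlinarith [sq_nonneg ((k:ℝ) - y - 2*Real.sqrt y), Real.sqrt_nonneg y]
    have h2 : Real.sqrt y ≤ y / Real.sqrt M := by
      rw [le_div_iff₀ hsMp]
      nlinarith [Real.sqrt_nonneg y]
    have h3 : 1 ≤ y / M := (one_le_div hM).2 hMy
    have h4 : (k:ℝ) + 1 ≤ A * y := by
      have hAy : A * y = y + 2*(y/Real.sqrt M) + y/M := by rw [hA]; ring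
      calc (k:ℝ) + 1 ≤ y + 2*Real.sqrt y + 1 := by linarith
        _ ≤ y + 2*(y/Real.sqrt M) + y/M := by linarith
        _ = A * y := hAy.symm
    exact Real.rpow_le_rpow_of_nonpos (by positivity) h4 (by linarith)
  have hkey := key_lb t y ((A*y) ^ (-t)) hy (Real.rpow_nonneg (by positivity) _) hcond
  have hyy : y ^ t * y ^ (-t) = 1 := by
    rw [← Real.rpow_add hy]
    simp
  have heq : y ^ t * ((A*y) ^ (-t)) = A ^ (-t) := by
    rw [Real.mul_rpow hApos.le hy.le, mul_comm (A ^ (-t)) (y ^ (-t)), ← mul_assoc, hyy, one_mul]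
  have heq2 : y ^ t * (3/4 * (A*y) ^ (-t) * Real.exp y) = 3/4 * A ^ (-t) * Real.exp y := by
    rw [show y ^ t * (3/4 * (A*y) ^ (-t) * Real.exp y)
      = 3/4 * (y ^ t * (A*y) ^ (-t)) * Real.exp y from by ring, heq]
  calc 3/4 * A ^ (-t) * Real.exp y
      = y ^ t * (3/4 * (A*y) ^ (-t) * Real.exp y) := heq2.symm
    _ ≤ y ^ t * ∑' k : ℕ, ((k : ℝ) + 1) ^ (-t) * y ^ k / (k ! : ℝ) :=
        mul_le_mul_of_nonneg_left hkey (Real.rpow_nonneg hy.le t)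


/-- `Σ_k (y/(k+1))^t y^k/k! ≥ C₀ e^y` for `y ≥ M`, and for all `y > 0`
when `t ≤ 0`. -/
theorem stmt16 (t M : ℝ) (hM : 0 < M) :
    (∃ C₀ > (0 : ℝ), ∀ y : ℝ, M ≤ y →
      C₀ * Real.exp y ≤
        ∑' k : ℕ, (y / ((k : ℝ) + 1)) ^ t * y ^ k / (Nat.factorial k : ℝ)) ∧
    (t ≤ 0 → ∃ C₀ > (0 : ℝ), ∀ y : ℝ, 0 < y →
      C₀ * Real.exp y ≤
        ∑' k : ℕ, (y / ((k : ℝ) + 1)) ^ t * y ^ k / (Nat.factorial k : ℝ)) := by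
  constructor
  · rcases le_or_gt t 0 with ht | ht
    · obtain ⟨C, hC, h⟩ := part_neg t ht
      exact ⟨C, hC, fun y hy => h y (hM.trans_le hy)⟩
    · exact part_pos t M hM ht.le
  · intro ht
    exact part_neg t ht
end
end

section
/- For r > 0, let g : ℂ → ℂ be a function defined on ℂ ∖ B(0;r) satisfying |g(z) − g(v)| ≤ C(1 + |z − v|) for all z, v ∈ ℂ ∖ B(0;r), where C > 0 is a constant. Then there exists a function G : ℂ → ℂ such that G(z) = g(z) for all z ∈ ℂ ∖ B(0;r) and |G(z) − G(v)| ≤ 2C(1 + |z − v|) for all z, v ∈ ℂ. -/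
/-! Between distinct points, `1 + dist x y` is again a pseudometric, and the hypothesis
`|f x - f y| ≤ C (1 + dist x y)` on `s` says exactly that `f / C` is `1`-Lipschitz on `s` for it.
McShane's extension theorem then extends real-valued such functions with the same constant; a
complex-valued one is extended through its real and imaginary parts, which costs the factor `2`. -/

open MeasureTheory Metric Complex Filter
open scoped ENNReal

noncomputable section

/-- `α` with the distance `1 + dist x y` between distinct points. -/
def OneAddDist (α : Type*) := α

namespace OneAddDist

variable {α : Type*} [PseudoMetricSpace α]

open Classical in
def dist' (x y : α) : ℝ := if x = y then 0 else 1 + dist x y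

theorem dist'_self (x : α) : dist' x x = 0 := if_pos rfl

theorem dist'_of_ne {x y : α} (h : x ≠ y) : dist' x y = 1 + dist x y := if_neg h

theorem dist'_le (x y : α) : dist' x y ≤ 1 + dist x y := by
  by_cases h : x = y
  · subst h; simp [dist'_self]
  · exact (dist'_of_ne h).le

theorem dist'_comm (x y : α) : dist' x y = dist' y x := by
  by_cases h : x = y
  · subst h; rfl
  · rw [dist'_of_ne h, dist'_of_ne (Ne.symm h), dist_comm]

theorem dist'_triangle (x y z : α) : dist' x z ≤ dist' x y + dist' y z := by
  by_cases hxz : x = z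
  · subst hxz
    rw [dist'_self, dist'_comm y]
    by_cases hxy : x = y
    · subst hxy; simp [dist'_self]
    · rw [dist'_of_ne hxy]; linarith [dist_nonneg (x := x) (y := y)]
  by_cases hxy : x = y
  · subst hxy; simp [dist'_self]
  by_cases hyz : y = z
  · subst hyz; simp [dist'_self]
  rw [dist'_of_ne hxz, dist'_of_ne hxy, dist'_of_ne hyz]
  linarith [dist_triangle x y z]

def toOneAddDist : α ≃ OneAddDist α := Equiv.refl α

instance : PseudoMetricSpace (OneAddDist α) where
  dist x y := dist' (toOneAddDist.symm x) (toOneAddDist.symm y)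
  dist_self x := dist'_self _
  dist_comm x y := dist'_comm _ _
  dist_triangle x y z := dist'_triangle _ _ _

theorem dist_toOneAddDist (x y : α) : dist (toOneAddDist x) (toOneAddDist y) = dist' x y := rfl

end OneAddDist

open OneAddDist in
theorem exists_extension_of_abs_sub_le_mul_one_add_dist {α : Type*} [PseudoMetricSpace α]
    {s : Set α} {f : α → ℝ} {C : ℝ} (hC : 0 < C)
    (hf : ∀ x ∈ s, ∀ y ∈ s, |f x - f y| ≤ C * (1 + dist x y)) :
    ∃ F : α → ℝ, Set.EqOn F f s ∧ ∀ x y, |F x - F y| ≤ C * (1 + dist x y) := by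
  have hlip : LipschitzOnWith 1 (fun x => f (toOneAddDist.symm x) / C) (toOneAddDist '' s) := by
    refine LipschitzOnWith.mk_one ?_
    rintro _ ⟨x, hx, rfl⟩ _ ⟨y, hy, rfl⟩
    by_cases hxy : x = y
    · subst hxy; simp
    · rw [Real.dist_eq, ← sub_div, abs_div, abs_of_pos hC, div_le_iff₀ hC, mul_comm,
        dist_toOneAddDist, dist'_of_ne hxy]
      exact hf x hx y hy
  obtain ⟨F, hFlip, hFeq⟩ := hlip.extend_real
  refine ⟨fun x => C * F (toOneAddDist x), fun x hx => ?_, fun x y => ?_⟩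
  · have hx' : f x / C = F (toOneAddDist x) := by simpa using hFeq ⟨x, hx, rfl⟩
    show C * F (toOneAddDist x) = f x
    rw [← hx', mul_div_cancel₀ _ hC.ne']
  · calc |C * F (toOneAddDist x) - C * F (toOneAddDist y)|
          = C * dist (F (toOneAddDist x)) (F (toOneAddDist y)) := by
          rw [← mul_sub, abs_mul, abs_of_pos hC, Real.dist_eq]
      _ ≤ C * dist' x y := by
          gcongr
          simpa [dist_toOneAddDist] using hFlip.dist_le_mul (toOneAddDist x) (toOneAddDist y)
      _ ≤ C * (1 + dist x y) := by gcongr; exact dist'_le x y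

theorem exists_complex_extension_of_norm_sub_le_mul_one_add_dist {α : Type*}
    [PseudoMetricSpace α] {s : Set α} {g : α → ℂ} {C : ℝ} (hC : 0 < C)
    (hg : ∀ x ∈ s, ∀ y ∈ s, ‖g x - g y‖ ≤ C * (1 + dist x y)) :
    ∃ G : α → ℂ, Set.EqOn G g s ∧ ∀ x y, ‖G x - G y‖ ≤ 2 * C * (1 + dist x y) := by
  obtain ⟨U, hUeq, hU⟩ := exists_extension_of_abs_sub_le_mul_one_add_dist (f := fun x => (g x).re)
    hC fun x hx y hy => by simpa using (abs_re_le_norm _).trans (hg x hx y hy)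
  obtain ⟨V, hVeq, hV⟩ := exists_extension_of_abs_sub_le_mul_one_add_dist (f := fun x => (g x).im)
    hC fun x hx y hy => by simpa using (abs_im_le_norm _).trans (hg x hx y hy)
  refine ⟨fun x => ⟨U x, V x⟩, fun x hx => Complex.ext (hUeq hx) (hVeq hx), fun x y => ?_⟩
  calc ‖(⟨U x, V x⟩ : ℂ) - ⟨U y, V y⟩‖ ≤ |U x - U y| + |V x - V y| := by
        simpa using norm_le_abs_re_add_abs_im ((⟨U x, V x⟩ : ℂ) - ⟨U y, V y⟩)
    _ ≤ 2 * C * (1 + dist x y) := by linarith [hU x y, hV x y]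

theorem stmt19_general (r C : ℝ) (hC : 0 < C) (g : ℂ → ℂ)
    (hg : ∀ z v : ℂ, r < ‖z‖ → r < ‖v‖ →
      ‖g z - g v‖ ≤ C * (1 + ‖z - v‖)) :
    ∃ G : ℂ → ℂ, (∀ z : ℂ, r < ‖z‖ → G z = g z) ∧
      ∀ z v : ℂ, ‖G z - G v‖ ≤ 2 * C * (1 + ‖z - v‖) := by
  obtain ⟨G, hGeq, hG⟩ := exists_complex_extension_of_norm_sub_le_mul_one_add_dist
    (s := {z : ℂ | r < ‖z‖}) hC fun z hz v hv => by simpa [dist_eq_norm] using hg z v hz hv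
  exact ⟨G, fun z hz => hGeq hz, fun z v => by simpa [dist_eq_norm] using hG z v⟩

/-- a function with Lipschitz-type growth outside a disk extends to the
whole plane with the constant at most doubled. -/
theorem stmt19 (r C : ℝ) (hr : 0 < r) (hC : 0 < C) (g : ℂ → ℂ)
    (hg : ∀ z v : ℂ, r < ‖z‖ → r < ‖v‖ →
      ‖g z - g v‖ ≤ C * (1 + ‖z - v‖)) :
    ∃ G : ℂ → ℂ, (∀ z : ℂ, r < ‖z‖ → G z = g z) ∧
      ∀ z v : ℂ, ‖G z - G v‖ ≤ 2 * C * (1 + ‖z - v‖) :=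
  stmt19_general r C hC g hg

end
end
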